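/- arXiv:2504.06433 — 3 statements merged into one kernel-verified Lean document; each statement's English description precedes it below -/
import Mathlib

section
/- Let k = k_1 + k_2, ℓ = ℓ_1 + ℓ_2, m = m_1 + m_2, and n = n_1 + n_2 with k_1, ℓ_1, m_1, n_1 ≥ 1. Work in the polynomial ring over ℂ with variables x_s (s ∈ {0,1}^k), y_t (t ∈ {0,1}^ℓ), z_u (u ∈ {0,1}^m), and w_v (v ∈ {0,1}^n). Write s = s_1 ∘ s_2, t = t_1 ∘ t_2, u = u_1 ∘ u_2, v = v_1 ∘ v_2 with s_i ∈ {0,1}^{k_i}, t_i ∈ {0,1}^{ℓ_i}, u_i ∈ {0,1}^{m_i}, v_i ∈ {0,1}^{n_i}. Let T_1 = Σ_{s,t} c_{s,t}·x_s·y_t and T_2 = Σ_{u,v} d_{u,v}·z_u·w_v, where the coefficients satisfy: there exist s_2, t_2 with c_{𝟙∘s_2, 𝟙∘t_2} ≠ 0; there exist u_2, v_2 with d_{𝟙∘u_2, 𝟙∘v_2} ≠ 0; there exist s_1 ≠ 𝟙, s_2, and t with c_{s_1∘s_2, t} ≠ 0; there exist s, t_1 ≠ 𝟙, and t_2 with c_{s,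 t_1∘t_2} ≠ 0; there exist u_1 ≠ 𝟙, u_2, and v with d_{u_1∘u_2, v} ≠ 0; and there exist u, v_1 ≠ 𝟙, and v_2 with d_{u, v_1∘v_2} ≠ 0. Fix a nonzero α ∈ ℂ and define P = T_1·T_2 − α·Σ_{s : s_1 = 𝟙} Σ_{t : t_1 = 𝟙} Σ_{u : u_1 = 𝟙} Σ_{v : v_1 = 𝟙} c_{s,t}·d_{u,v}·x_s·y_t·z_u·w_v. Then P is irreducible (and in particular indecomposable). -/
open MvPolynomial



/-- A polynomial is decomposable if it is a product of two nonconstant polynomials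
depending on disjoint sets of variables. -/
def Decomposable {σ : Type*} [DecidableEq σ] (f : MvPolynomial σ ℂ) : Prop :=
  ∃ g h : MvPolynomial σ ℂ,
    (¬ ∃ c : ℂ, g = MvPolynomial.C c) ∧ (¬ ∃ c : ℂ, h = MvPolynomial.C c) ∧
    Disjoint g.vars h.vars ∧ f = g * h

namespace Stmt6Helpers

variable {σ : Type*} [DecidableEq σ]

theorem eq_C_of_degreeOf_eq_zero {R : Type*} [CommSemiring R] {G : MvPolynomial σ R}
    (h : ∀ i, G.degreeOf i = 0) : ∃ a, G = MvPolynomial.C a := by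
  refine ⟨G.coeff 0, ?_⟩
  ext m
  rcases eq_or_ne m 0 with rfl | hm
  · simp
  · have : G.coeff m = 0 := by
      by_contra hc
      obtain ⟨i, hi⟩ := Finsupp.ne_iff.mp hm
      rw [Finsupp.coe_zero, Pi.zero_apply] at hi
      have hmem : m ∈ G.support := MvPolynomial.mem_support_iff.mpr hc
      have h2 := MvPolynomial.monomial_le_degreeOf i hmem
      rw [h i] at h2
      omega
    rw [this, MvPolynomial.coeff_C, if_neg (by exact fun hh => hm (by simp [← hh]))]

omit [DecidableEq σ] in
theorem degreeOf_mul_eq_of_ne_zero [Fintype σ] {G H : MvPolynomial σ ℂ}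
    (hG : G ≠ 0) (hH : H ≠ 0) (i : σ) :
    (G * H).degreeOf i = G.degreeOf i + H.degreeOf i := by
  obtain ⟨n, hn⟩ : ∃ n, Fintype.card σ = n + 1 := by
    have : Nonempty σ := ⟨i⟩
    have := Fintype.card_pos (α := σ)
    exact ⟨Fintype.card σ - 1, by omega⟩
  let e0 : σ ≃ Fin (n + 1) := Fintype.equivFinOfCardEq hn
  let e : σ ≃ Fin (n + 1) := e0.trans (Equiv.swap (e0 i) 0)
  have hei : e i = 0 := by simp [e]
  have hrw : ∀ (F : MvPolynomial σ ℂ), F.degreeOf i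
      = ((MvPolynomial.finSuccEquiv ℂ n) (MvPolynomial.rename e F)).natDegree := by
    intro F
    rw [MvPolynomial.natDegree_finSuccEquiv, ← hei,
      MvPolynomial.degreeOf_rename_of_injective e.injective]
  have hne : ∀ (F : MvPolynomial σ ℂ), F ≠ 0 →
      (MvPolynomial.finSuccEquiv ℂ n) (MvPolynomial.rename e F) ≠ 0 := by
    intro F hF
    simp only [ne_eq, EmbeddingLike.map_eq_zero_iff]
    exact fun hc =>
      hF ((MvPolynomial.rename_injective e e.injective).eq_iff.mp (by simpa using hc) : F = 0)
  rw [hrw, hrw, hrw, map_mul, map_mul, Polynomial.natDegree_mul (hne G hG) (hne H hH)]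

theorem coeff_mul_disjoint {R : Type*} [CommSemiring R] {G H : MvPolynomial σ R}
    (hdisj : Disjoint G.vars H.vars) (a b : σ →₀ ℕ)
    (ha : ∀ i ∈ a.support, i ∈ G.vars) (hb : ∀ i ∈ b.support, i ∈ H.vars) :
    (G * H).coeff (a + b) = G.coeff a * H.coeff b := by
  classical
  rw [MvPolynomial.coeff_mul]
  rw [Finset.sum_eq_single (a, b)]
  · intro p hp hne
    rcases eq_or_ne (G.coeff p.1) 0 with h1 | h1
    · rw [h1, zero_mul]
    rcases eq_or_ne (H.coeff p.2) 0 with h2 | h2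
    · rw [h2, mul_zero]
    exfalso
    have hsum : p.1 + p.2 = a + b := Finset.HasAntidiagonal.mem_antidiagonal.mp hp
    have hp1 : ∀ i ∈ p.1.support, i ∈ G.vars := fun i hi =>
      (MvPolynomial.mem_vars i).mpr ⟨p.1, MvPolynomial.mem_support_iff.mpr h1, hi⟩
    have hp2 : ∀ i ∈ p.2.support, i ∈ H.vars := fun i hi =>
      (MvPolynomial.mem_vars i).mpr ⟨p.2, MvPolynomial.mem_support_iff.mpr h2, hi⟩
    apply hne
    have h1e : p.1 = a := by
      ext i
      have hi := DFunLike.congr_fun hsum i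
      simp only [Finsupp.add_apply] at hi
      by_cases hiG : i ∈ G.vars
      · have hbi : b i = 0 := by
          by_contra hbi
          exact (Finset.disjoint_left.mp hdisj hiG) (hb i (Finsupp.mem_support_iff.mpr hbi))
        have hp2i : p.2 i = 0 := by
          by_contra hp2i
          exact (Finset.disjoint_left.mp hdisj hiG) (hp2 i (Finsupp.mem_support_iff.mpr hp2i))
        omega
      · have hai : a i = 0 := by
          by_contra hai
          exact hiG (ha i (Finsupp.mem_support_iff.mpr hai))
        have hp1i : p.1 i = 0 := by
          by_contra hp1i
          exact hiG (hp1 i (Finsupp.mem_support_iff.mpr hp1i))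
        omega
    have h2e : p.2 = b := by
      ext i
      have hi := DFunLike.congr_fun hsum i
      simp only [Finsupp.add_apply] at hi
      have := DFunLike.congr_fun h1e i
      omega
    exact Prod.ext h1e h2e
  · intro hnot
    exfalso
    exact hnot (Finset.HasAntidiagonal.mem_antidiagonal.mpr rfl)

theorem exists_mem_vars_of_nonconst {H : MvPolynomial σ ℂ} (h : ¬∃ a, H = MvPolynomial.C a) :
    ∃ i, i ∈ H.vars := by
  by_contra hc
  push_neg at hc
  apply h
  apply eq_C_of_degreeOf_eq_zero
  intro i
  rw [MvPolynomial.degreeOf_eq_sup]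
  apply Nat.eq_zero_of_le_zero
  apply Finset.sup_le
  intro m hm
  by_contra hmi
  exact hc i ((MvPolynomial.mem_vars i).mpr ⟨m, hm, Finsupp.mem_support_iff.mpr (by omega)⟩)

theorem supp_pair {f g : σ →₀ ℕ} {W : Finset σ}
    (hf : ∀ i ∈ f.support, i ∈ W) (hg : ∀ i ∈ g.support, i ∈ W) :
    ∀ i ∈ (f + g).support, i ∈ W := by
  intro i hi
  rcases Finset.mem_union.mp (Finsupp.support_add hi) with h | h
  exacts [hf i h, hg i h]

theorem supp_sing {a : σ} {W : Finset σ} (ha : a ∈ W) :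
    ∀ i ∈ (Finsupp.single a (1 : ℕ)).support, i ∈ W := by
  intro i hi
  rw [Finset.mem_singleton.mp (Finsupp.support_single_subset hi)]
  exact ha

end Stmt6Helpers

namespace Stmt6Core

variable {S T U V : Type*}

noncomputable abbrev MX (s : S) : (S ⊕ (T ⊕ (U ⊕ V))) →₀ ℕ := Finsupp.single (Sum.inl s) 1
noncomputable abbrev MY (t : T) : (S ⊕ (T ⊕ (U ⊕ V))) →₀ ℕ := Finsupp.single (Sum.inr (Sum.inl t)) 1
noncomputable abbrev MZ (u : U) : (S ⊕ (T ⊕ (U ⊕ V))) →₀ ℕ := Finsupp.single (Sum.inr (Sum.inr (Sum.inl u))) 1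
noncomputable abbrev MW (v : V) : (S ⊕ (T ⊕ (U ⊕ V))) →₀ ℕ := Finsupp.single (Sum.inr (Sum.inr (Sum.inr v))) 1

noncomputable def Mon (s : S) (t : T) (u : U) (v : V) : (S ⊕ (T ⊕ (U ⊕ V))) →₀ ℕ :=
  MX s + MY t + MZ u + MW v

theorem Mon_def (s : S) (t : T) (u : U) (v : V) :
    Mon s t u v = MX s + MY t + MZ u + MW v := rfl

variable [DecidableEq S] [DecidableEq T] [DecidableEq U] [DecidableEq V]

@[simp] theorem Mon_apply_x (s : S) (t : T) (u : U) (v : V) (s' : S) :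
    Mon s t u v (Sum.inl s') = if s = s' then 1 else 0 := by
  simp [Mon, Finsupp.single_apply]

@[simp] theorem Mon_apply_y (s : S) (t : T) (u : U) (v : V) (t' : T) :
    Mon s t u v (Sum.inr (Sum.inl t')) = if t = t' then 1 else 0 := by
  simp [Mon, Finsupp.single_apply]

@[simp] theorem Mon_apply_z (s : S) (t : T) (u : U) (v : V) (u' : U) :
    Mon s t u v (Sum.inr (Sum.inr (Sum.inl u'))) = if u = u' then 1 else 0 := by
  simp [Mon, Finsupp.single_apply]

@[simp] theorem Mon_apply_w (s : S) (t : T) (u : U) (v : V) (v' : V) :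
    Mon s t u v (Sum.inr (Sum.inr (Sum.inr v'))) = if v = v' then 1 else 0 := by
  simp [Mon, Finsupp.single_apply]

theorem Mon_inj {s s' : S} {t t' : T} {u u' : U} {v v' : V}
    (h : Mon s t u v = Mon s' t' u' v') : s = s' ∧ t = t' ∧ u = u' ∧ v = v' := by
  refine ⟨?_, ?_, ?_, ?_⟩
  · have h1 := DFunLike.congr_fun h (Sum.inl s)
    rw [Mon_apply_x, Mon_apply_x, if_pos rfl] at h1
    by_contra hne
    rw [if_neg (Ne.symm hne)] at h1
    exact one_ne_zero h1
  · have h1 := DFunLike.congr_fun h (Sum.inr (Sum.inl t))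
    rw [Mon_apply_y, Mon_apply_y, if_pos rfl] at h1
    by_contra hne
    rw [if_neg (Ne.symm hne)] at h1
    exact one_ne_zero h1
  · have h1 := DFunLike.congr_fun h (Sum.inr (Sum.inr (Sum.inl u)))
    rw [Mon_apply_z, Mon_apply_z, if_pos rfl] at h1
    by_contra hne
    rw [if_neg (Ne.symm hne)] at h1
    exact one_ne_zero h1
  · have h1 := DFunLike.congr_fun h (Sum.inr (Sum.inr (Sum.inr v)))
    rw [Mon_apply_w, Mon_apply_w, if_pos rfl] at h1
    by_contra hne
    rw [if_neg (Ne.symm hne)] at h1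
    exact one_ne_zero h1

variable [Fintype S] [Fintype T] [Fintype U] [Fintype V]

theorem coeff_bigsum (E : S → T → U → V → ℂ) (s : S) (t : T) (u : U) (v : V) :
    MvPolynomial.coeff (Mon s t u v)
      (∑ s' : S, ∑ t' : T, ∑ u' : U, ∑ v' : V,
        MvPolynomial.monomial (Mon s' t' u' v') (E s' t' u' v')) = E s t u v := by
  simp only [MvPolynomial.coeff_sum, MvPolynomial.coeff_monomial]
  rw [Finset.sum_eq_single s]
  rotate_left
  · intro s' _ hs'
    exact Finset.sum_eq_zero fun t' _ => Finset.sum_eq_zero fun u' _ =>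
      Finset.sum_eq_zero fun v' _ => by rw [if_neg (fun h => hs' (Mon_inj h).1)]
  · intro h; exact absurd (Finset.mem_univ s) h
  rw [Finset.sum_eq_single t]
  rotate_left
  · intro t' _ ht'
    exact Finset.sum_eq_zero fun u' _ =>
      Finset.sum_eq_zero fun v' _ => by rw [if_neg (fun h => ht' (Mon_inj h).2.1)]
  · intro h; exact absurd (Finset.mem_univ t) h
  rw [Finset.sum_eq_single u]
  rotate_left
  · intro u' _ hu'
    exact Finset.sum_eq_zero fun v' _ => by rw [if_neg (fun h => hu' (Mon_inj h).2.2.1)]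
  · intro h; exact absurd (Finset.mem_univ u) h
  rw [Finset.sum_eq_single v]
  rotate_left
  · intro v' _ hv'
    rw [if_neg (fun h => hv' (Mon_inj h).2.2.2)]
  · intro h; exact absurd (Finset.mem_univ v) h
  rw [if_pos rfl]

theorem shape_bigsum (E : S → T → U → V → ℂ) (μ : (S ⊕ (T ⊕ (U ⊕ V))) →₀ ℕ)
    (h : MvPolynomial.coeff μ
      (∑ s' : S, ∑ t' : T, ∑ u' : U, ∑ v' : V,
        MvPolynomial.monomial (Mon s' t' u' v') (E s' t' u' v')) ≠ 0) :
    ∃ s t u v, μ = Mon s t u v := by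
  simp only [MvPolynomial.coeff_sum] at h
  obtain ⟨s, -, h⟩ := Finset.exists_ne_zero_of_sum_ne_zero h
  obtain ⟨t, -, h⟩ := Finset.exists_ne_zero_of_sum_ne_zero h
  obtain ⟨u, -, h⟩ := Finset.exists_ne_zero_of_sum_ne_zero h
  obtain ⟨v, -, h⟩ := Finset.exists_ne_zero_of_sum_ne_zero h
  rw [MvPolynomial.coeff_monomial] at h
  by_cases hc : Mon s t u v = μ
  · exact ⟨s, t, u, v, hc.symm⟩
  · rw [if_neg hc] at h; exact absurd rfl h


theorem nosplit
    (c : S → T → ℂ) (d : U → V → ℂ)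
    (χS : S → Prop) (χT : T → Prop) (χU : U → Prop) (χV : V → Prop)
    (α : ℂ) (hα : α ≠ 0) (E : S → T → U → V → ℂ)
    (hE1 : ∀ s t u v, χS s → χT t → χU u → χV v → E s t u v = c s t * d u v * (1 - α))
    (hE0 : ∀ s t u v, ¬(χS s ∧ χT t ∧ χU u ∧ χV v) → E s t u v = c s t * d u v)
    (s₁ : S) (t₁ : T) (hs₁ : χS s₁) (ht₁ : χT t₁) (hc₁ : c s₁ t₁ ≠ 0)
    (u₁ : U) (v₁ : V) (hu₁ : χU u₁) (hv₁ : χV v₁) (hd₁ : d u₁ v₁ ≠ 0)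
    (s₂ : S) (t₂ : T) (hs₂ : ¬ χS s₂) (hc₂ : c s₂ t₂ ≠ 0)
    (s₃ : S) (t₃ : T) (ht₃ : ¬ χT t₃) (hc₃ : c s₃ t₃ ≠ 0)
    (u₂ : U) (v₂ : V) (hu₂ : ¬ χU u₂) (hd₂ : d u₂ v₂ ≠ 0)
    (u₃ : U) (v₃ : V) (hv₃ : ¬ χV v₃) (hd₃ : d u₃ v₃ ≠ 0)
    (P G H : MvPolynomial (S ⊕ (T ⊕ (U ⊕ V))) ℂ)
    (hP : P = ∑ s : S, ∑ t : T, ∑ u : U, ∑ v : V,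
      MvPolynomial.monomial (Mon s t u v) (E s t u v))
    (hHn : ¬ ∃ a, H = MvPolynomial.C a)
    (hdisj : Disjoint G.vars H.vars)
    (hPGH : P = G * H)
    (hxG : Sum.inl s₁ ∈ G.vars) : False := by
  classical
  have hcP : ∀ s t u v, P.coeff (Mon s t u v) = E s t u v := by
    intro s t u v; rw [hP]; exact coeff_bigsum E s t u v
  have shape : ∀ μ, P.coeff μ ≠ 0 → ∃ s t u v, μ = Mon s t u v := by
    intro μ h; rw [hP] at h; exact shape_bigsum E μ h
  have keyc : ∀ (s : S) (t : T) (u : U) (v : V) (a b : (S ⊕ (T ⊕ (U ⊕ V))) →₀ ℕ),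
      a + b = Mon s t u v → (∀ i ∈ a.support, i ∈ G.vars) →
      (∀ i ∈ b.support, i ∈ H.vars) →
      G.coeff a * H.coeff b = E s t u v := by
    intro s t u v a b hab ha hb
    rw [← Stmt6Helpers.coeff_mul_disjoint hdisj a b ha hb, ← hPGH, hab, hcP]
  have varIn : ∀ μ, P.coeff μ ≠ 0 → ∀ i, μ i ≠ 0 → i ∈ G.vars ∪ H.vars := by
    intro μ hμ i hi
    rw [hPGH, MvPolynomial.coeff_mul] at hμ
    obtain ⟨p, hpmem, hp⟩ := Finset.exists_ne_zero_of_sum_ne_zero hμ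
    have hsum := Finset.HasAntidiagonal.mem_antidiagonal.mp hpmem
    have h1 : G.coeff p.1 ≠ 0 := left_ne_zero_of_mul hp
    have h2 : H.coeff p.2 ≠ 0 := right_ne_zero_of_mul hp
    have hor : p.1 i ≠ 0 ∨ p.2 i ≠ 0 := by
      have := DFunLike.congr_fun hsum i
      simp only [Finsupp.add_apply] at this
      omega
    rcases hor with h | h
    · exact Finset.mem_union_left _ ((MvPolynomial.mem_vars i).mpr
        ⟨p.1, MvPolynomial.mem_support_iff.mpr h1, Finsupp.mem_support_iff.mpr h⟩)
    · exact Finset.mem_union_right _ ((MvPolynomial.mem_vars i).mpr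
        ⟨p.2, MvPolynomial.mem_support_iff.mpr h2, Finsupp.mem_support_iff.mpr h⟩)
  have blk : ∀ (i j : S ⊕ (T ⊕ (U ⊕ V))),
      (∀ s0 t0 u0 v0, (Mon (S := S) (T := T) (U := U) (V := V) s0 t0 u0 v0) i ≠ 0 →
        (Mon s0 t0 u0 v0) j ≠ 0 → i = j) →
      i ∈ G.vars → j ∈ H.vars → False := by
    intro i j hij hiG hjH
    obtain ⟨a, haG, hai⟩ := (MvPolynomial.mem_vars i).mp hiG
    obtain ⟨b, hbH, hbj⟩ := (MvPolynomial.mem_vars j).mp hjH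
    have hco := Stmt6Helpers.coeff_mul_disjoint hdisj a b
      (fun i' hi' => (MvPolynomial.mem_vars i').mpr ⟨a, haG, hi'⟩)
      (fun i' hi' => (MvPolynomial.mem_vars i').mpr ⟨b, hbH, hi'⟩)
    have hne : P.coeff (a + b) ≠ 0 := by
      rw [hPGH, hco]
      exact mul_ne_zero (MvPolynomial.mem_support_iff.mp haG)
        (MvPolynomial.mem_support_iff.mp hbH)
    obtain ⟨s0, t0, u0, v0, hsh⟩ := shape _ hne
    have hi0 : (Mon s0 t0 u0 v0) i ≠ 0 := by
      rw [← hsh, Finsupp.add_apply]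
      have := Finsupp.mem_support_iff.mp hai
      omega
    have hj0 : (Mon s0 t0 u0 v0) j ≠ 0 := by
      rw [← hsh, Finsupp.add_apply]
      have := Finsupp.mem_support_iff.mp hbj
      omega
    have hij' := hij s0 t0 u0 v0 hi0 hj0
    subst hij'
    exact Finset.disjoint_left.mp hdisj hiG hjH
  have noXX : ∀ (s s' : S), Sum.inl s ∈ G.vars → Sum.inl s' ∈ H.vars → False := by
    intro s s' h1 h2
    refine blk _ _ (fun s0 t0 u0 v0 hi hj => ?_) h1 h2
    rw [Mon_apply_x] at hi hj
    have e1 : s0 = s := by by_contra hh; rw [if_neg hh] at hi; exact hi rfl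
    have e2 : s0 = s' := by by_contra hh; rw [if_neg hh] at hj; exact hj rfl
    rw [← e1, e2]
  have noYY : ∀ (t t' : T), Sum.inr (Sum.inl t) ∈ G.vars →
      Sum.inr (Sum.inl t') ∈ H.vars → False := by
    intro t t' h1 h2
    refine blk _ _ (fun s0 t0 u0 v0 hi hj => ?_) h1 h2
    rw [Mon_apply_y] at hi hj
    have e1 : t0 = t := by by_contra hh; rw [if_neg hh] at hi; exact hi rfl
    have e2 : t0 = t' := by by_contra hh; rw [if_neg hh] at hj; exact hj rfl
    rw [← e1, e2]
  have noZZ : ∀ (u u' : U), Sum.inr (Sum.inr (Sum.inl u)) ∈ G.vars →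
      Sum.inr (Sum.inr (Sum.inl u')) ∈ H.vars → False := by
    intro u u' h1 h2
    refine blk _ _ (fun s0 t0 u0 v0 hi hj => ?_) h1 h2
    rw [Mon_apply_z] at hi hj
    have e1 : u0 = u := by by_contra hh; rw [if_neg hh] at hi; exact hi rfl
    have e2 : u0 = u' := by by_contra hh; rw [if_neg hh] at hj; exact hj rfl
    rw [← e1, e2]
  have noWW : ∀ (v v' : V), Sum.inr (Sum.inr (Sum.inr v)) ∈ G.vars →
      Sum.inr (Sum.inr (Sum.inr v')) ∈ H.vars → False := by
    intro v v' h1 h2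
    refine blk _ _ (fun s0 t0 u0 v0 hi hj => ?_) h1 h2
    rw [Mon_apply_w] at hi hj
    have e1 : v0 = v := by by_contra hh; rw [if_neg hh] at hi; exact hi rfl
    have e2 : v0 = v' := by by_contra hh; rw [if_neg hh] at hj; exact hj rfl
    rw [← e1, e2]
  have hm1 : P.coeff (Mon s₁ t₁ u₂ v₂) ≠ 0 := by
    rw [hcP, hE0 _ _ _ _ (fun h => hu₂ h.2.2.1)]; exact mul_ne_zero hc₁ hd₂
  have hm2 : P.coeff (Mon s₂ t₂ u₁ v₁) ≠ 0 := by
    rw [hcP, hE0 _ _ _ _ (fun h => hs₂ h.1)]; exact mul_ne_zero hc₂ hd₁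
  have hm3 : P.coeff (Mon s₃ t₃ u₁ v₁) ≠ 0 := by
    rw [hcP, hE0 _ _ _ _ (fun h => ht₃ h.2.1)]; exact mul_ne_zero hc₃ hd₁
  have hm4 : P.coeff (Mon s₁ t₁ u₃ v₃) ≠ 0 := by
    rw [hcP, hE0 _ _ _ _ (fun h => hv₃ h.2.2.2)]; exact mul_ne_zero hc₁ hd₃
  have uX2 : Sum.inl s₂ ∈ G.vars ∪ H.vars := varIn _ hm2 _ (by simp)
  have uX3 : Sum.inl s₃ ∈ G.vars ∪ H.vars := varIn _ hm3 _ (by simp)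
  have uY1 : Sum.inr (Sum.inl t₁) ∈ G.vars ∪ H.vars := varIn _ hm1 _ (by simp)
  have uY2 : Sum.inr (Sum.inl t₂) ∈ G.vars ∪ H.vars := varIn _ hm2 _ (by simp)
  have uY3 : Sum.inr (Sum.inl t₃) ∈ G.vars ∪ H.vars := varIn _ hm3 _ (by simp)
  have uZ1 : Sum.inr (Sum.inr (Sum.inl u₁)) ∈ G.vars ∪ H.vars := varIn _ hm2 _ (by simp)
  have uZ2 : Sum.inr (Sum.inr (Sum.inl u₂)) ∈ G.vars ∪ H.vars := varIn _ hm1 _ (by simp)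
  have uZ3 : Sum.inr (Sum.inr (Sum.inl u₃)) ∈ G.vars ∪ H.vars := varIn _ hm4 _ (by simp)
  have uW1 : Sum.inr (Sum.inr (Sum.inr v₁)) ∈ G.vars ∪ H.vars := varIn _ hm2 _ (by simp)
  have uW2 : Sum.inr (Sum.inr (Sum.inr v₂)) ∈ G.vars ∪ H.vars := varIn _ hm1 _ (by simp)
  have uW3 : Sum.inr (Sum.inr (Sum.inr v₃)) ∈ G.vars ∪ H.vars := varIn _ hm4 _ (by simp)
  have hxG2 : Sum.inl s₂ ∈ G.vars :=
    (Finset.mem_union.mp uX2).resolve_right (fun hh => noXX s₁ s₂ hxG hh)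
  have hxG3 : Sum.inl s₃ ∈ G.vars :=
    (Finset.mem_union.mp uX3).resolve_right (fun hh => noXX s₁ s₃ hxG hh)
  have hE0S : ∀ t u v, E s₂ t u v = c s₂ t * d u v := fun t u v => hE0 _ _ _ _ (fun h => hs₂ h.1)
  have hE0T : ∀ s u v, E s t₃ u v = c s t₃ * d u v := fun s u v => hE0 _ _ _ _ (fun h => ht₃ h.2.1)
  have hE0U : ∀ s t v, E s t u₂ v = c s t * d u₂ v := fun s t v => hE0 _ _ _ _ (fun h => hu₂ h.2.2.1)
  have hE0V : ∀ s t u, E s t u v₃ = c s t * d u v₃ := fun s t u => hE0 _ _ _ _ (fun h => hv₃ h.2.2.2)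
  have eAval : E s₁ t₁ u₁ v₁ = c s₁ t₁ * d u₁ v₁ * (1 - α) := hE1 _ _ _ _ hs₁ ht₁ hu₁ hv₁
  by_cases hsidey : Sum.inr (Sum.inl t₁) ∈ G.vars <;>
    by_cases hsidez : Sum.inr (Sum.inr (Sum.inl u₁)) ∈ G.vars <;>
      by_cases hsidew : Sum.inr (Sum.inr (Sum.inr v₁)) ∈ G.vars
  · -- case y:G z:G w:G
    have hsidey := hsidey
    have hsidez := hsidez
    have hsidew := hsidew
    obtain ⟨i, hiH⟩ := Stmt6Helpers.exists_mem_vars_of_nonconst hHn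
    rcases i with s' | i
    · exact noXX s₁ s' hxG hiH
    rcases i with t' | i
    · exact noYY t₁ t' hsidey hiH
    rcases i with u' | v'
    · exact noZZ u₁ u' hsidez hiH
    · exact noWW v₁ v' hsidew hiH
  · -- case y:G z:G w:H
    have hsidey := hsidey
    have hsidez := hsidez
    have hsidew := (Finset.mem_union.mp uW1).resolve_left hsidew
    have hyG1 : Sum.inr (Sum.inl t₁) ∈ G.vars := hsidey
    have hyG2 : Sum.inr (Sum.inl t₂) ∈ G.vars :=
      (Finset.mem_union.mp uY2).resolve_right (fun hh => noYY t₁ t₂ hsidey hh)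
    have hyG3 : Sum.inr (Sum.inl t₃) ∈ G.vars :=
      (Finset.mem_union.mp uY3).resolve_right (fun hh => noYY t₁ t₃ hsidey hh)
    have hzG1 : Sum.inr (Sum.inr (Sum.inl u₁)) ∈ G.vars := hsidez
    have hzG2 : Sum.inr (Sum.inr (Sum.inl u₂)) ∈ G.vars :=
      (Finset.mem_union.mp uZ2).resolve_right (fun hh => noZZ u₁ u₂ hsidez hh)
    have hzG3 : Sum.inr (Sum.inr (Sum.inl u₃)) ∈ G.vars :=
      (Finset.mem_union.mp uZ3).resolve_right (fun hh => noZZ u₁ u₃ hsidez hh)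
    have hwH1 : Sum.inr (Sum.inr (Sum.inr v₁)) ∈ H.vars := hsidew
    have hwH2 : Sum.inr (Sum.inr (Sum.inr v₂)) ∈ H.vars :=
      (Finset.mem_union.mp uW2).resolve_left (fun hh => noWW v₂ v₁ hh hsidew)
    have hwH3 : Sum.inr (Sum.inr (Sum.inr v₃)) ∈ H.vars :=
      (Finset.mem_union.mp uW3).resolve_left (fun hh => noWW v₃ v₁ hh hsidew)
    have eA : G.coeff (MX s₁ + MY t₁ + MZ u₁) * H.coeff (MW v₁) = c s₁ t₁ * d u₁ v₁ * (1 - α) := by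
      rw [keyc s₁ t₁ u₁ v₁ _ _ (by rw [Mon_def]; try abel) (Stmt6Helpers.supp_pair (Stmt6Helpers.supp_pair (Stmt6Helpers.supp_sing hxG) (Stmt6Helpers.supp_sing hyG1)) (Stmt6Helpers.supp_sing hzG1)) (Stmt6Helpers.supp_sing hwH1)]
      exact eAval
    have eB : G.coeff (MX s₁ + MY t₁ + MZ u₁) * H.coeff (MW v₃) = c s₁ t₁ * d u₁ v₃ := by
      rw [keyc s₁ t₁ u₁ v₃ _ _ (by rw [Mon_def]; try abel) (Stmt6Helpers.supp_pair (Stmt6Helpers.supp_pair (Stmt6Helpers.supp_sing hxG) (Stmt6Helpers.supp_sing hyG1)) (Stmt6Helpers.supp_sing hzG1)) (Stmt6Helpers.supp_sing hwH3)]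
      exact hE0V s₁ t₁ u₁
    have eC : G.coeff (MX s₂ + MY t₂ + MZ u₁) * H.coeff (MW v₁) = c s₂ t₂ * d u₁ v₁ := by
      rw [keyc s₂ t₂ u₁ v₁ _ _ (by rw [Mon_def]; try abel) (Stmt6Helpers.supp_pair (Stmt6Helpers.supp_pair (Stmt6Helpers.supp_sing hxG2) (Stmt6Helpers.supp_sing hyG2)) (Stmt6Helpers.supp_sing hzG1)) (Stmt6Helpers.supp_sing hwH1)]
      exact hE0S t₂ u₁ v₁
    have eD : G.coeff (MX s₂ + MY t₂ + MZ u₁) * H.coeff (MW v₃) = c s₂ t₂ * d u₁ v₃ := by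
      rw [keyc s₂ t₂ u₁ v₃ _ _ (by rw [Mon_def]; try abel) (Stmt6Helpers.supp_pair (Stmt6Helpers.supp_pair (Stmt6Helpers.supp_sing hxG2) (Stmt6Helpers.supp_sing hyG2)) (Stmt6Helpers.supp_sing hzG1)) (Stmt6Helpers.supp_sing hwH3)]
      exact hE0S t₂ u₁ v₃
    have eWh : G.coeff (MX s₁ + MY t₁ + MZ u₃) * H.coeff (MW v₃) = c s₁ t₁ * d u₃ v₃ := by
      rw [keyc s₁ t₁ u₃ v₃ _ _ (by rw [Mon_def]; try abel) (Stmt6Helpers.supp_pair (Stmt6Helpers.supp_pair (Stmt6Helpers.supp_sing hxG) (Stmt6Helpers.supp_sing hyG1)) (Stmt6Helpers.supp_sing hzG3)) (Stmt6Helpers.supp_sing hwH3)]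
      exact hE0V s₁ t₁ u₃
    have hg2 : G.coeff (MX s₂ + MY t₂ + MZ u₁) ≠ 0 := by
      refine left_ne_zero_of_mul (a := G.coeff (MX s₂ + MY t₂ + MZ u₁)) (b := H.coeff (MW v₁)) ?_
      rw [eC]; exact mul_ne_zero hc₂ hd₁
    have hh2 : H.coeff (MW v₃) ≠ 0 := by
      refine right_ne_zero_of_mul (a := G.coeff (MX s₁ + MY t₁ + MZ u₃)) ?_
      rw [eWh]; exact mul_ne_zero hc₁ hd₃
    have hDne : G.coeff (MX s₂ + MY t₂ + MZ u₁) * H.coeff (MW v₃) ≠ 0 := mul_ne_zero hg2 hh2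
    have hDval : c s₂ t₂ * d u₁ v₃ ≠ 0 := eD ▸ hDne
    have hmnr : (G.coeff (MX s₁ + MY t₁ + MZ u₁) * H.coeff (MW v₁)) * (G.coeff (MX s₂ + MY t₂ + MZ u₁) * H.coeff (MW v₃))
        = (G.coeff (MX s₁ + MY t₁ + MZ u₁) * H.coeff (MW v₃)) * (G.coeff (MX s₂ + MY t₂ + MZ u₁) * H.coeff (MW v₁)) := by ring
    rw [eA, eB, eC, eD] at hmnr
    have hfin : α * (c s₁ t₁ * (d u₁ v₁ * (c s₂ t₂ * d u₁ v₃))) = 0 := by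
      linear_combination -hmnr
    exact mul_ne_zero hα (mul_ne_zero hc₁ (mul_ne_zero hd₁ hDval)) hfin
  · -- case y:G z:H w:G
    have hsidey := hsidey
    have hsidez := (Finset.mem_union.mp uZ1).resolve_left hsidez
    have hsidew := hsidew
    have hyG1 : Sum.inr (Sum.inl t₁) ∈ G.vars := hsidey
    have hyG2 : Sum.inr (Sum.inl t₂) ∈ G.vars :=
      (Finset.mem_union.mp uY2).resolve_right (fun hh => noYY t₁ t₂ hsidey hh)
    have hyG3 : Sum.inr (Sum.inl t₃) ∈ G.vars :=
      (Finset.mem_union.mp uY3).resolve_right (fun hh => noYY t₁ t₃ hsidey hh)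
    have hzH1 : Sum.inr (Sum.inr (Sum.inl u₁)) ∈ H.vars := hsidez
    have hzH2 : Sum.inr (Sum.inr (Sum.inl u₂)) ∈ H.vars :=
      (Finset.mem_union.mp uZ2).resolve_left (fun hh => noZZ u₂ u₁ hh hsidez)
    have hzH3 : Sum.inr (Sum.inr (Sum.inl u₃)) ∈ H.vars :=
      (Finset.mem_union.mp uZ3).resolve_left (fun hh => noZZ u₃ u₁ hh hsidez)
    have hwG1 : Sum.inr (Sum.inr (Sum.inr v₁)) ∈ G.vars := hsidew
    have hwG2 : Sum.inr (Sum.inr (Sum.inr v₂)) ∈ G.vars :=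
      (Finset.mem_union.mp uW2).resolve_right (fun hh => noWW v₁ v₂ hsidew hh)
    have hwG3 : Sum.inr (Sum.inr (Sum.inr v₃)) ∈ G.vars :=
      (Finset.mem_union.mp uW3).resolve_right (fun hh => noWW v₁ v₃ hsidew hh)
    have eA : G.coeff (MX s₁ + MY t₁ + MW v₁) * H.coeff (MZ u₁) = c s₁ t₁ * d u₁ v₁ * (1 - α) := by
      rw [keyc s₁ t₁ u₁ v₁ _ _ (by rw [Mon_def]; try abel) (Stmt6Helpers.supp_pair (Stmt6Helpers.supp_pair (Stmt6Helpers.supp_sing hxG) (Stmt6Helpers.supp_sing hyG1)) (Stmt6Helpers.supp_sing hwG1)) (Stmt6Helpers.supp_sing hzH1)]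
      exact eAval
    have eB : G.coeff (MX s₁ + MY t₁ + MW v₁) * H.coeff (MZ u₂) = c s₁ t₁ * d u₂ v₁ := by
      rw [keyc s₁ t₁ u₂ v₁ _ _ (by rw [Mon_def]; try abel) (Stmt6Helpers.supp_pair (Stmt6Helpers.supp_pair (Stmt6Helpers.supp_sing hxG) (Stmt6Helpers.supp_sing hyG1)) (Stmt6Helpers.supp_sing hwG1)) (Stmt6Helpers.supp_sing hzH2)]
      exact hE0U s₁ t₁ v₁
    have eC : G.coeff (MX s₂ + MY t₂ + MW v₁) * H.coeff (MZ u₁) = c s₂ t₂ * d u₁ v₁ := by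
      rw [keyc s₂ t₂ u₁ v₁ _ _ (by rw [Mon_def]; try abel) (Stmt6Helpers.supp_pair (Stmt6Helpers.supp_pair (Stmt6Helpers.supp_sing hxG2) (Stmt6Helpers.supp_sing hyG2)) (Stmt6Helpers.supp_sing hwG1)) (Stmt6Helpers.supp_sing hzH1)]
      exact hE0S t₂ u₁ v₁
    have eD : G.coeff (MX s₂ + MY t₂ + MW v₁) * H.coeff (MZ u₂) = c s₂ t₂ * d u₂ v₁ := by
      rw [keyc s₂ t₂ u₂ v₁ _ _ (by rw [Mon_def]; try abel) (Stmt6Helpers.supp_pair (Stmt6Helpers.supp_pair (Stmt6Helpers.supp_sing hxG2) (Stmt6Helpers.supp_sing hyG2)) (Stmt6Helpers.supp_sing hwG1)) (Stmt6Helpers.supp_sing hzH2)]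
      exact hE0S t₂ u₂ v₁
    have eWh : G.coeff (MX s₁ + MY t₁ + MW v₂) * H.coeff (MZ u₂) = c s₁ t₁ * d u₂ v₂ := by
      rw [keyc s₁ t₁ u₂ v₂ _ _ (by rw [Mon_def]; try abel) (Stmt6Helpers.supp_pair (Stmt6Helpers.supp_pair (Stmt6Helpers.supp_sing hxG) (Stmt6Helpers.supp_sing hyG1)) (Stmt6Helpers.supp_sing hwG2)) (Stmt6Helpers.supp_sing hzH2)]
      exact hE0U s₁ t₁ v₂
    have hg2 : G.coeff (MX s₂ + MY t₂ + MW v₁) ≠ 0 := by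
      refine left_ne_zero_of_mul (a := G.coeff (MX s₂ + MY t₂ + MW v₁)) (b := H.coeff (MZ u₁)) ?_
      rw [eC]; exact mul_ne_zero hc₂ hd₁
    have hh2 : H.coeff (MZ u₂) ≠ 0 := by
      refine right_ne_zero_of_mul (a := G.coeff (MX s₁ + MY t₁ + MW v₂)) ?_
      rw [eWh]; exact mul_ne_zero hc₁ hd₂
    have hDne : G.coeff (MX s₂ + MY t₂ + MW v₁) * H.coeff (MZ u₂) ≠ 0 := mul_ne_zero hg2 hh2
    have hDval : c s₂ t₂ * d u₂ v₁ ≠ 0 := eD ▸ hDne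
    have hmnr : (G.coeff (MX s₁ + MY t₁ + MW v₁) * H.coeff (MZ u₁)) * (G.coeff (MX s₂ + MY t₂ + MW v₁) * H.coeff (MZ u₂))
        = (G.coeff (MX s₁ + MY t₁ + MW v₁) * H.coeff (MZ u₂)) * (G.coeff (MX s₂ + MY t₂ + MW v₁) * H.coeff (MZ u₁)) := by ring
    rw [eA, eB, eC, eD] at hmnr
    have hfin : α * (c s₁ t₁ * (d u₁ v₁ * (c s₂ t₂ * d u₂ v₁))) = 0 := by
      linear_combination -hmnr
    exact mul_ne_zero hα (mul_ne_zero hc₁ (mul_ne_zero hd₁ hDval)) hfin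
  · -- case y:G z:H w:H
    have hsidey := hsidey
    have hsidez := (Finset.mem_union.mp uZ1).resolve_left hsidez
    have hsidew := (Finset.mem_union.mp uW1).resolve_left hsidew
    have hyG1 : Sum.inr (Sum.inl t₁) ∈ G.vars := hsidey
    have hyG2 : Sum.inr (Sum.inl t₂) ∈ G.vars :=
      (Finset.mem_union.mp uY2).resolve_right (fun hh => noYY t₁ t₂ hsidey hh)
    have hyG3 : Sum.inr (Sum.inl t₃) ∈ G.vars :=
      (Finset.mem_union.mp uY3).resolve_right (fun hh => noYY t₁ t₃ hsidey hh)
    have hzH1 : Sum.inr (Sum.inr (Sum.inl u₁)) ∈ H.vars := hsidez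
    have hzH2 : Sum.inr (Sum.inr (Sum.inl u₂)) ∈ H.vars :=
      (Finset.mem_union.mp uZ2).resolve_left (fun hh => noZZ u₂ u₁ hh hsidez)
    have hzH3 : Sum.inr (Sum.inr (Sum.inl u₃)) ∈ H.vars :=
      (Finset.mem_union.mp uZ3).resolve_left (fun hh => noZZ u₃ u₁ hh hsidez)
    have hwH1 : Sum.inr (Sum.inr (Sum.inr v₁)) ∈ H.vars := hsidew
    have hwH2 : Sum.inr (Sum.inr (Sum.inr v₂)) ∈ H.vars :=
      (Finset.mem_union.mp uW2).resolve_left (fun hh => noWW v₂ v₁ hh hsidew)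
    have hwH3 : Sum.inr (Sum.inr (Sum.inr v₃)) ∈ H.vars :=
      (Finset.mem_union.mp uW3).resolve_left (fun hh => noWW v₃ v₁ hh hsidew)
    have eA : G.coeff (MX s₁ + MY t₁) * H.coeff (MZ u₁ + MW v₁) = c s₁ t₁ * d u₁ v₁ * (1 - α) := by
      rw [keyc s₁ t₁ u₁ v₁ _ _ (by rw [Mon_def]; try abel) (Stmt6Helpers.supp_pair (Stmt6Helpers.supp_sing hxG) (Stmt6Helpers.supp_sing hyG1)) (Stmt6Helpers.supp_pair (Stmt6Helpers.supp_sing hzH1) (Stmt6Helpers.supp_sing hwH1))]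
      exact eAval
    have eB : G.coeff (MX s₁ + MY t₁) * H.coeff (MZ u₂ + MW v₂) = c s₁ t₁ * d u₂ v₂ := by
      rw [keyc s₁ t₁ u₂ v₂ _ _ (by rw [Mon_def]; try abel) (Stmt6Helpers.supp_pair (Stmt6Helpers.supp_sing hxG) (Stmt6Helpers.supp_sing hyG1)) (Stmt6Helpers.supp_pair (Stmt6Helpers.supp_sing hzH2) (Stmt6Helpers.supp_sing hwH2))]
      exact hE0U s₁ t₁ v₂
    have eC : G.coeff (MX s₂ + MY t₂) * H.coeff (MZ u₁ + MW v₁) = c s₂ t₂ * d u₁ v₁ := by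
      rw [keyc s₂ t₂ u₁ v₁ _ _ (by rw [Mon_def]; try abel) (Stmt6Helpers.supp_pair (Stmt6Helpers.supp_sing hxG2) (Stmt6Helpers.supp_sing hyG2)) (Stmt6Helpers.supp_pair (Stmt6Helpers.supp_sing hzH1) (Stmt6Helpers.supp_sing hwH1))]
      exact hE0S t₂ u₁ v₁
    have eD : G.coeff (MX s₂ + MY t₂) * H.coeff (MZ u₂ + MW v₂) = c s₂ t₂ * d u₂ v₂ := by
      rw [keyc s₂ t₂ u₂ v₂ _ _ (by rw [Mon_def]; try abel) (Stmt6Helpers.supp_pair (Stmt6Helpers.supp_sing hxG2) (Stmt6Helpers.supp_sing hyG2)) (Stmt6Helpers.supp_pair (Stmt6Helpers.supp_sing hzH2) (Stmt6Helpers.supp_sing hwH2))]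
      exact hE0S t₂ u₂ v₂
    have hg2 : G.coeff (MX s₂ + MY t₂) ≠ 0 := by
      refine left_ne_zero_of_mul (a := G.coeff (MX s₂ + MY t₂)) (b := H.coeff (MZ u₁ + MW v₁)) ?_
      rw [eC]; exact mul_ne_zero hc₂ hd₁
    have hh2 : H.coeff (MZ u₂ + MW v₂) ≠ 0 := by
      refine right_ne_zero_of_mul (a := G.coeff (MX s₁ + MY t₁)) ?_
      rw [eB]; exact mul_ne_zero hc₁ hd₂
    have hDne : G.coeff (MX s₂ + MY t₂) * H.coeff (MZ u₂ + MW v₂) ≠ 0 := mul_ne_zero hg2 hh2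
    have hDval : c s₂ t₂ * d u₂ v₂ ≠ 0 := eD ▸ hDne
    have hmnr : (G.coeff (MX s₁ + MY t₁) * H.coeff (MZ u₁ + MW v₁)) * (G.coeff (MX s₂ + MY t₂) * H.coeff (MZ u₂ + MW v₂))
        = (G.coeff (MX s₁ + MY t₁) * H.coeff (MZ u₂ + MW v₂)) * (G.coeff (MX s₂ + MY t₂) * H.coeff (MZ u₁ + MW v₁)) := by ring
    rw [eA, eB, eC, eD] at hmnr
    have hfin : α * (c s₁ t₁ * (d u₁ v₁ * (c s₂ t₂ * d u₂ v₂))) = 0 := by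
      linear_combination -hmnr
    exact mul_ne_zero hα (mul_ne_zero hc₁ (mul_ne_zero hd₁ hDval)) hfin
  · -- case y:H z:G w:G
    have hsidey := (Finset.mem_union.mp uY1).resolve_left hsidey
    have hsidez := hsidez
    have hsidew := hsidew
    have hyH1 : Sum.inr (Sum.inl t₁) ∈ H.vars := hsidey
    have hyH2 : Sum.inr (Sum.inl t₂) ∈ H.vars :=
      (Finset.mem_union.mp uY2).resolve_left (fun hh => noYY t₂ t₁ hh hsidey)
    have hyH3 : Sum.inr (Sum.inl t₃) ∈ H.vars :=
      (Finset.mem_union.mp uY3).resolve_left (fun hh => noYY t₃ t₁ hh hsidey)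
    have hzG1 : Sum.inr (Sum.inr (Sum.inl u₁)) ∈ G.vars := hsidez
    have hzG2 : Sum.inr (Sum.inr (Sum.inl u₂)) ∈ G.vars :=
      (Finset.mem_union.mp uZ2).resolve_right (fun hh => noZZ u₁ u₂ hsidez hh)
    have hzG3 : Sum.inr (Sum.inr (Sum.inl u₃)) ∈ G.vars :=
      (Finset.mem_union.mp uZ3).resolve_right (fun hh => noZZ u₁ u₃ hsidez hh)
    have hwG1 : Sum.inr (Sum.inr (Sum.inr v₁)) ∈ G.vars := hsidew
    have hwG2 : Sum.inr (Sum.inr (Sum.inr v₂)) ∈ G.vars :=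
      (Finset.mem_union.mp uW2).resolve_right (fun hh => noWW v₁ v₂ hsidew hh)
    have hwG3 : Sum.inr (Sum.inr (Sum.inr v₃)) ∈ G.vars :=
      (Finset.mem_union.mp uW3).resolve_right (fun hh => noWW v₁ v₃ hsidew hh)
    have eA : G.coeff (MX s₁ + MZ u₁ + MW v₁) * H.coeff (MY t₁) = c s₁ t₁ * d u₁ v₁ * (1 - α) := by
      rw [keyc s₁ t₁ u₁ v₁ _ _ (by rw [Mon_def]; try abel) (Stmt6Helpers.supp_pair (Stmt6Helpers.supp_pair (Stmt6Helpers.supp_sing hxG) (Stmt6Helpers.supp_sing hzG1)) (Stmt6Helpers.supp_sing hwG1)) (Stmt6Helpers.supp_sing hyH1)]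
      exact eAval
    have eB : G.coeff (MX s₁ + MZ u₁ + MW v₁) * H.coeff (MY t₃) = c s₁ t₃ * d u₁ v₁ := by
      rw [keyc s₁ t₃ u₁ v₁ _ _ (by rw [Mon_def]; try abel) (Stmt6Helpers.supp_pair (Stmt6Helpers.supp_pair (Stmt6Helpers.supp_sing hxG) (Stmt6Helpers.supp_sing hzG1)) (Stmt6Helpers.supp_sing hwG1)) (Stmt6Helpers.supp_sing hyH3)]
      exact hE0T s₁ u₁ v₁
    have eC : G.coeff (MX s₁ + MZ u₂ + MW v₂) * H.coeff (MY t₁) = c s₁ t₁ * d u₂ v₂ := by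
      rw [keyc s₁ t₁ u₂ v₂ _ _ (by rw [Mon_def]; try abel) (Stmt6Helpers.supp_pair (Stmt6Helpers.supp_pair (Stmt6Helpers.supp_sing hxG) (Stmt6Helpers.supp_sing hzG2)) (Stmt6Helpers.supp_sing hwG2)) (Stmt6Helpers.supp_sing hyH1)]
      exact hE0U s₁ t₁ v₂
    have eD : G.coeff (MX s₁ + MZ u₂ + MW v₂) * H.coeff (MY t₃) = c s₁ t₃ * d u₂ v₂ := by
      rw [keyc s₁ t₃ u₂ v₂ _ _ (by rw [Mon_def]; try abel) (Stmt6Helpers.supp_pair (Stmt6Helpers.supp_pair (Stmt6Helpers.supp_sing hxG) (Stmt6Helpers.supp_sing hzG2)) (Stmt6Helpers.supp_sing hwG2)) (Stmt6Helpers.supp_sing hyH3)]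
      exact hE0T s₁ u₂ v₂
    have eWh : G.coeff (MX s₃ + MZ u₁ + MW v₁) * H.coeff (MY t₃) = c s₃ t₃ * d u₁ v₁ := by
      rw [keyc s₃ t₃ u₁ v₁ _ _ (by rw [Mon_def]; try abel) (Stmt6Helpers.supp_pair (Stmt6Helpers.supp_pair (Stmt6Helpers.supp_sing hxG3) (Stmt6Helpers.supp_sing hzG1)) (Stmt6Helpers.supp_sing hwG1)) (Stmt6Helpers.supp_sing hyH3)]
      exact hE0T s₃ u₁ v₁
    have hg2 : G.coeff (MX s₁ + MZ u₂ + MW v₂) ≠ 0 := by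
      refine left_ne_zero_of_mul (a := G.coeff (MX s₁ + MZ u₂ + MW v₂)) (b := H.coeff (MY t₁)) ?_
      rw [eC]; exact mul_ne_zero hc₁ hd₂
    have hh2 : H.coeff (MY t₃) ≠ 0 := by
      refine right_ne_zero_of_mul (a := G.coeff (MX s₃ + MZ u₁ + MW v₁)) ?_
      rw [eWh]; exact mul_ne_zero hc₃ hd₁
    have hDne : G.coeff (MX s₁ + MZ u₂ + MW v₂) * H.coeff (MY t₃) ≠ 0 := mul_ne_zero hg2 hh2
    have hDval : c s₁ t₃ * d u₂ v₂ ≠ 0 := eD ▸ hDne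
    have hmnr : (G.coeff (MX s₁ + MZ u₁ + MW v₁) * H.coeff (MY t₁)) * (G.coeff (MX s₁ + MZ u₂ + MW v₂) * H.coeff (MY t₃))
        = (G.coeff (MX s₁ + MZ u₁ + MW v₁) * H.coeff (MY t₃)) * (G.coeff (MX s₁ + MZ u₂ + MW v₂) * H.coeff (MY t₁)) := by ring
    rw [eA, eB, eC, eD] at hmnr
    have hfin : α * (c s₁ t₁ * (d u₁ v₁ * (c s₁ t₃ * d u₂ v₂))) = 0 := by
      linear_combination -hmnr
    exact mul_ne_zero hα (mul_ne_zero hc₁ (mul_ne_zero hd₁ hDval)) hfin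
  · -- case y:H z:G w:H
    have hsidey := (Finset.mem_union.mp uY1).resolve_left hsidey
    have hsidez := hsidez
    have hsidew := (Finset.mem_union.mp uW1).resolve_left hsidew
    have hyH1 : Sum.inr (Sum.inl t₁) ∈ H.vars := hsidey
    have hyH2 : Sum.inr (Sum.inl t₂) ∈ H.vars :=
      (Finset.mem_union.mp uY2).resolve_left (fun hh => noYY t₂ t₁ hh hsidey)
    have hyH3 : Sum.inr (Sum.inl t₃) ∈ H.vars :=
      (Finset.mem_union.mp uY3).resolve_left (fun hh => noYY t₃ t₁ hh hsidey)
    have hzG1 : Sum.inr (Sum.inr (Sum.inl u₁)) ∈ G.vars := hsidez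
    have hzG2 : Sum.inr (Sum.inr (Sum.inl u₂)) ∈ G.vars :=
      (Finset.mem_union.mp uZ2).resolve_right (fun hh => noZZ u₁ u₂ hsidez hh)
    have hzG3 : Sum.inr (Sum.inr (Sum.inl u₃)) ∈ G.vars :=
      (Finset.mem_union.mp uZ3).resolve_right (fun hh => noZZ u₁ u₃ hsidez hh)
    have hwH1 : Sum.inr (Sum.inr (Sum.inr v₁)) ∈ H.vars := hsidew
    have hwH2 : Sum.inr (Sum.inr (Sum.inr v₂)) ∈ H.vars :=
      (Finset.mem_union.mp uW2).resolve_left (fun hh => noWW v₂ v₁ hh hsidew)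
    have hwH3 : Sum.inr (Sum.inr (Sum.inr v₃)) ∈ H.vars :=
      (Finset.mem_union.mp uW3).resolve_left (fun hh => noWW v₃ v₁ hh hsidew)
    have eA : G.coeff (MX s₁ + MZ u₁) * H.coeff (MY t₁ + MW v₁) = c s₁ t₁ * d u₁ v₁ * (1 - α) := by
      rw [keyc s₁ t₁ u₁ v₁ _ _ (by rw [Mon_def]; try abel) (Stmt6Helpers.supp_pair (Stmt6Helpers.supp_sing hxG) (Stmt6Helpers.supp_sing hzG1)) (Stmt6Helpers.supp_pair (Stmt6Helpers.supp_sing hyH1) (Stmt6Helpers.supp_sing hwH1))]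
      exact eAval
    have eB : G.coeff (MX s₁ + MZ u₁) * H.coeff (MY t₁ + MW v₃) = c s₁ t₁ * d u₁ v₃ := by
      rw [keyc s₁ t₁ u₁ v₃ _ _ (by rw [Mon_def]; try abel) (Stmt6Helpers.supp_pair (Stmt6Helpers.supp_sing hxG) (Stmt6Helpers.supp_sing hzG1)) (Stmt6Helpers.supp_pair (Stmt6Helpers.supp_sing hyH1) (Stmt6Helpers.supp_sing hwH3))]
      exact hE0V s₁ t₁ u₁
    have eC : G.coeff (MX s₂ + MZ u₁) * H.coeff (MY t₁ + MW v₁) = c s₂ t₁ * d u₁ v₁ := by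
      rw [keyc s₂ t₁ u₁ v₁ _ _ (by rw [Mon_def]; try abel) (Stmt6Helpers.supp_pair (Stmt6Helpers.supp_sing hxG2) (Stmt6Helpers.supp_sing hzG1)) (Stmt6Helpers.supp_pair (Stmt6Helpers.supp_sing hyH1) (Stmt6Helpers.supp_sing hwH1))]
      exact hE0S t₁ u₁ v₁
    have eD : G.coeff (MX s₂ + MZ u₁) * H.coeff (MY t₁ + MW v₃) = c s₂ t₁ * d u₁ v₃ := by
      rw [keyc s₂ t₁ u₁ v₃ _ _ (by rw [Mon_def]; try abel) (Stmt6Helpers.supp_pair (Stmt6Helpers.supp_sing hxG2) (Stmt6Helpers.supp_sing hzG1)) (Stmt6Helpers.supp_pair (Stmt6Helpers.supp_sing hyH1) (Stmt6Helpers.supp_sing hwH3))]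
      exact hE0S t₁ u₁ v₃
    have eWg : G.coeff (MX s₂ + MZ u₁) * H.coeff (MY t₂ + MW v₁) = c s₂ t₂ * d u₁ v₁ := by
      rw [keyc s₂ t₂ u₁ v₁ _ _ (by rw [Mon_def]; try abel) (Stmt6Helpers.supp_pair (Stmt6Helpers.supp_sing hxG2) (Stmt6Helpers.supp_sing hzG1)) (Stmt6Helpers.supp_pair (Stmt6Helpers.supp_sing hyH2) (Stmt6Helpers.supp_sing hwH1))]
      exact hE0S t₂ u₁ v₁
    have eWh : G.coeff (MX s₁ + MZ u₃) * H.coeff (MY t₁ + MW v₃) = c s₁ t₁ * d u₃ v₃ := by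
      rw [keyc s₁ t₁ u₃ v₃ _ _ (by rw [Mon_def]; try abel) (Stmt6Helpers.supp_pair (Stmt6Helpers.supp_sing hxG) (Stmt6Helpers.supp_sing hzG3)) (Stmt6Helpers.supp_pair (Stmt6Helpers.supp_sing hyH1) (Stmt6Helpers.supp_sing hwH3))]
      exact hE0V s₁ t₁ u₃
    have hg2 : G.coeff (MX s₂ + MZ u₁) ≠ 0 := by
      refine left_ne_zero_of_mul (a := G.coeff (MX s₂ + MZ u₁)) (b := H.coeff (MY t₂ + MW v₁)) ?_
      rw [eWg]; exact mul_ne_zero hc₂ hd₁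
    have hh2 : H.coeff (MY t₁ + MW v₃) ≠ 0 := by
      refine right_ne_zero_of_mul (a := G.coeff (MX s₁ + MZ u₃)) ?_
      rw [eWh]; exact mul_ne_zero hc₁ hd₃
    have hDne : G.coeff (MX s₂ + MZ u₁) * H.coeff (MY t₁ + MW v₃) ≠ 0 := mul_ne_zero hg2 hh2
    have hDval : c s₂ t₁ * d u₁ v₃ ≠ 0 := eD ▸ hDne
    have hmnr : (G.coeff (MX s₁ + MZ u₁) * H.coeff (MY t₁ + MW v₁)) * (G.coeff (MX s₂ + MZ u₁) * H.coeff (MY t₁ + MW v₃))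
        = (G.coeff (MX s₁ + MZ u₁) * H.coeff (MY t₁ + MW v₃)) * (G.coeff (MX s₂ + MZ u₁) * H.coeff (MY t₁ + MW v₁)) := by ring
    rw [eA, eB, eC, eD] at hmnr
    have hfin : α * (c s₁ t₁ * (d u₁ v₁ * (c s₂ t₁ * d u₁ v₃))) = 0 := by
      linear_combination -hmnr
    exact mul_ne_zero hα (mul_ne_zero hc₁ (mul_ne_zero hd₁ hDval)) hfin
  · -- case y:H z:H w:G
    have hsidey := (Finset.mem_union.mp uY1).resolve_left hsidey
    have hsidez := (Finset.mem_union.mp uZ1).resolve_left hsidez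
    have hsidew := hsidew
    have hyH1 : Sum.inr (Sum.inl t₁) ∈ H.vars := hsidey
    have hyH2 : Sum.inr (Sum.inl t₂) ∈ H.vars :=
      (Finset.mem_union.mp uY2).resolve_left (fun hh => noYY t₂ t₁ hh hsidey)
    have hyH3 : Sum.inr (Sum.inl t₃) ∈ H.vars :=
      (Finset.mem_union.mp uY3).resolve_left (fun hh => noYY t₃ t₁ hh hsidey)
    have hzH1 : Sum.inr (Sum.inr (Sum.inl u₁)) ∈ H.vars := hsidez
    have hzH2 : Sum.inr (Sum.inr (Sum.inl u₂)) ∈ H.vars :=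
      (Finset.mem_union.mp uZ2).resolve_left (fun hh => noZZ u₂ u₁ hh hsidez)
    have hzH3 : Sum.inr (Sum.inr (Sum.inl u₃)) ∈ H.vars :=
      (Finset.mem_union.mp uZ3).resolve_left (fun hh => noZZ u₃ u₁ hh hsidez)
    have hwG1 : Sum.inr (Sum.inr (Sum.inr v₁)) ∈ G.vars := hsidew
    have hwG2 : Sum.inr (Sum.inr (Sum.inr v₂)) ∈ G.vars :=
      (Finset.mem_union.mp uW2).resolve_right (fun hh => noWW v₁ v₂ hsidew hh)
    have hwG3 : Sum.inr (Sum.inr (Sum.inr v₃)) ∈ G.vars :=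
      (Finset.mem_union.mp uW3).resolve_right (fun hh => noWW v₁ v₃ hsidew hh)
    have eA : G.coeff (MX s₁ + MW v₁) * H.coeff (MY t₁ + MZ u₁) = c s₁ t₁ * d u₁ v₁ * (1 - α) := by
      rw [keyc s₁ t₁ u₁ v₁ _ _ (by rw [Mon_def]; try abel) (Stmt6Helpers.supp_pair (Stmt6Helpers.supp_sing hxG) (Stmt6Helpers.supp_sing hwG1)) (Stmt6Helpers.supp_pair (Stmt6Helpers.supp_sing hyH1) (Stmt6Helpers.supp_sing hzH1))]
      exact eAval
    have eB : G.coeff (MX s₁ + MW v₁) * H.coeff (MY t₁ + MZ u₂) = c s₁ t₁ * d u₂ v₁ := by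
      rw [keyc s₁ t₁ u₂ v₁ _ _ (by rw [Mon_def]; try abel) (Stmt6Helpers.supp_pair (Stmt6Helpers.supp_sing hxG) (Stmt6Helpers.supp_sing hwG1)) (Stmt6Helpers.supp_pair (Stmt6Helpers.supp_sing hyH1) (Stmt6Helpers.supp_sing hzH2))]
      exact hE0U s₁ t₁ v₁
    have eC : G.coeff (MX s₂ + MW v₁) * H.coeff (MY t₁ + MZ u₁) = c s₂ t₁ * d u₁ v₁ := by
      rw [keyc s₂ t₁ u₁ v₁ _ _ (by rw [Mon_def]; try abel) (Stmt6Helpers.supp_pair (Stmt6Helpers.supp_sing hxG2) (Stmt6Helpers.supp_sing hwG1)) (Stmt6Helpers.supp_pair (Stmt6Helpers.supp_sing hyH1) (Stmt6Helpers.supp_sing hzH1))]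
      exact hE0S t₁ u₁ v₁
    have eD : G.coeff (MX s₂ + MW v₁) * H.coeff (MY t₁ + MZ u₂) = c s₂ t₁ * d u₂ v₁ := by
      rw [keyc s₂ t₁ u₂ v₁ _ _ (by rw [Mon_def]; try abel) (Stmt6Helpers.supp_pair (Stmt6Helpers.supp_sing hxG2) (Stmt6Helpers.supp_sing hwG1)) (Stmt6Helpers.supp_pair (Stmt6Helpers.supp_sing hyH1) (Stmt6Helpers.supp_sing hzH2))]
      exact hE0S t₁ u₂ v₁
    have eWg : G.coeff (MX s₂ + MW v₁) * H.coeff (MY t₂ + MZ u₁) = c s₂ t₂ * d u₁ v₁ := by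
      rw [keyc s₂ t₂ u₁ v₁ _ _ (by rw [Mon_def]; try abel) (Stmt6Helpers.supp_pair (Stmt6Helpers.supp_sing hxG2) (Stmt6Helpers.supp_sing hwG1)) (Stmt6Helpers.supp_pair (Stmt6Helpers.supp_sing hyH2) (Stmt6Helpers.supp_sing hzH1))]
      exact hE0S t₂ u₁ v₁
    have eWh : G.coeff (MX s₁ + MW v₂) * H.coeff (MY t₁ + MZ u₂) = c s₁ t₁ * d u₂ v₂ := by
      rw [keyc s₁ t₁ u₂ v₂ _ _ (by rw [Mon_def]; try abel) (Stmt6Helpers.supp_pair (Stmt6Helpers.supp_sing hxG) (Stmt6Helpers.supp_sing hwG2)) (Stmt6Helpers.supp_pair (Stmt6Helpers.supp_sing hyH1) (Stmt6Helpers.supp_sing hzH2))]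
      exact hE0U s₁ t₁ v₂
    have hg2 : G.coeff (MX s₂ + MW v₁) ≠ 0 := by
      refine left_ne_zero_of_mul (a := G.coeff (MX s₂ + MW v₁)) (b := H.coeff (MY t₂ + MZ u₁)) ?_
      rw [eWg]; exact mul_ne_zero hc₂ hd₁
    have hh2 : H.coeff (MY t₁ + MZ u₂) ≠ 0 := by
      refine right_ne_zero_of_mul (a := G.coeff (MX s₁ + MW v₂)) ?_
      rw [eWh]; exact mul_ne_zero hc₁ hd₂
    have hDne : G.coeff (MX s₂ + MW v₁) * H.coeff (MY t₁ + MZ u₂) ≠ 0 := mul_ne_zero hg2 hh2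
    have hDval : c s₂ t₁ * d u₂ v₁ ≠ 0 := eD ▸ hDne
    have hmnr : (G.coeff (MX s₁ + MW v₁) * H.coeff (MY t₁ + MZ u₁)) * (G.coeff (MX s₂ + MW v₁) * H.coeff (MY t₁ + MZ u₂))
        = (G.coeff (MX s₁ + MW v₁) * H.coeff (MY t₁ + MZ u₂)) * (G.coeff (MX s₂ + MW v₁) * H.coeff (MY t₁ + MZ u₁)) := by ring
    rw [eA, eB, eC, eD] at hmnr
    have hfin : α * (c s₁ t₁ * (d u₁ v₁ * (c s₂ t₁ * d u₂ v₁))) = 0 := by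
      linear_combination -hmnr
    exact mul_ne_zero hα (mul_ne_zero hc₁ (mul_ne_zero hd₁ hDval)) hfin
  · -- case y:H z:H w:H
    have hsidey := (Finset.mem_union.mp uY1).resolve_left hsidey
    have hsidez := (Finset.mem_union.mp uZ1).resolve_left hsidez
    have hsidew := (Finset.mem_union.mp uW1).resolve_left hsidew
    have hyH1 : Sum.inr (Sum.inl t₁) ∈ H.vars := hsidey
    have hyH2 : Sum.inr (Sum.inl t₂) ∈ H.vars :=
      (Finset.mem_union.mp uY2).resolve_left (fun hh => noYY t₂ t₁ hh hsidey)
    have hyH3 : Sum.inr (Sum.inl t₃) ∈ H.vars :=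
      (Finset.mem_union.mp uY3).resolve_left (fun hh => noYY t₃ t₁ hh hsidey)
    have hzH1 : Sum.inr (Sum.inr (Sum.inl u₁)) ∈ H.vars := hsidez
    have hzH2 : Sum.inr (Sum.inr (Sum.inl u₂)) ∈ H.vars :=
      (Finset.mem_union.mp uZ2).resolve_left (fun hh => noZZ u₂ u₁ hh hsidez)
    have hzH3 : Sum.inr (Sum.inr (Sum.inl u₃)) ∈ H.vars :=
      (Finset.mem_union.mp uZ3).resolve_left (fun hh => noZZ u₃ u₁ hh hsidez)
    have hwH1 : Sum.inr (Sum.inr (Sum.inr v₁)) ∈ H.vars := hsidew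
    have hwH2 : Sum.inr (Sum.inr (Sum.inr v₂)) ∈ H.vars :=
      (Finset.mem_union.mp uW2).resolve_left (fun hh => noWW v₂ v₁ hh hsidew)
    have hwH3 : Sum.inr (Sum.inr (Sum.inr v₃)) ∈ H.vars :=
      (Finset.mem_union.mp uW3).resolve_left (fun hh => noWW v₃ v₁ hh hsidew)
    have eA : G.coeff (MX s₁) * H.coeff (MY t₁ + MZ u₁ + MW v₁) = c s₁ t₁ * d u₁ v₁ * (1 - α) := by
      rw [keyc s₁ t₁ u₁ v₁ _ _ (by rw [Mon_def]; try abel) (Stmt6Helpers.supp_sing hxG) (Stmt6Helpers.supp_pair (Stmt6Helpers.supp_pair (Stmt6Helpers.supp_sing hyH1) (Stmt6Helpers.supp_sing hzH1)) (Stmt6Helpers.supp_sing hwH1))]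
      exact eAval
    have eB : G.coeff (MX s₁) * H.coeff (MY t₁ + MZ u₂ + MW v₂) = c s₁ t₁ * d u₂ v₂ := by
      rw [keyc s₁ t₁ u₂ v₂ _ _ (by rw [Mon_def]; try abel) (Stmt6Helpers.supp_sing hxG) (Stmt6Helpers.supp_pair (Stmt6Helpers.supp_pair (Stmt6Helpers.supp_sing hyH1) (Stmt6Helpers.supp_sing hzH2)) (Stmt6Helpers.supp_sing hwH2))]
      exact hE0U s₁ t₁ v₂
    have eC : G.coeff (MX s₂) * H.coeff (MY t₁ + MZ u₁ + MW v₁) = c s₂ t₁ * d u₁ v₁ := by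
      rw [keyc s₂ t₁ u₁ v₁ _ _ (by rw [Mon_def]; try abel) (Stmt6Helpers.supp_sing hxG2) (Stmt6Helpers.supp_pair (Stmt6Helpers.supp_pair (Stmt6Helpers.supp_sing hyH1) (Stmt6Helpers.supp_sing hzH1)) (Stmt6Helpers.supp_sing hwH1))]
      exact hE0S t₁ u₁ v₁
    have eD : G.coeff (MX s₂) * H.coeff (MY t₁ + MZ u₂ + MW v₂) = c s₂ t₁ * d u₂ v₂ := by
      rw [keyc s₂ t₁ u₂ v₂ _ _ (by rw [Mon_def]; try abel) (Stmt6Helpers.supp_sing hxG2) (Stmt6Helpers.supp_pair (Stmt6Helpers.supp_pair (Stmt6Helpers.supp_sing hyH1) (Stmt6Helpers.supp_sing hzH2)) (Stmt6Helpers.supp_sing hwH2))]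
      exact hE0S t₁ u₂ v₂
    have eWg : G.coeff (MX s₂) * H.coeff (MY t₂ + MZ u₁ + MW v₁) = c s₂ t₂ * d u₁ v₁ := by
      rw [keyc s₂ t₂ u₁ v₁ _ _ (by rw [Mon_def]; try abel) (Stmt6Helpers.supp_sing hxG2) (Stmt6Helpers.supp_pair (Stmt6Helpers.supp_pair (Stmt6Helpers.supp_sing hyH2) (Stmt6Helpers.supp_sing hzH1)) (Stmt6Helpers.supp_sing hwH1))]
      exact hE0S t₂ u₁ v₁
    have hg2 : G.coeff (MX s₂) ≠ 0 := by
      refine left_ne_zero_of_mul (a := G.coeff (MX s₂)) (b := H.coeff (MY t₂ + MZ u₁ + MW v₁)) ?_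
      rw [eWg]; exact mul_ne_zero hc₂ hd₁
    have hh2 : H.coeff (MY t₁ + MZ u₂ + MW v₂) ≠ 0 := by
      refine right_ne_zero_of_mul (a := G.coeff (MX s₁)) ?_
      rw [eB]; exact mul_ne_zero hc₁ hd₂
    have hDne : G.coeff (MX s₂) * H.coeff (MY t₁ + MZ u₂ + MW v₂) ≠ 0 := mul_ne_zero hg2 hh2
    have hDval : c s₂ t₁ * d u₂ v₂ ≠ 0 := eD ▸ hDne
    have hmnr : (G.coeff (MX s₁) * H.coeff (MY t₁ + MZ u₁ + MW v₁)) * (G.coeff (MX s₂) * H.coeff (MY t₁ + MZ u₂ + MW v₂))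
        = (G.coeff (MX s₁) * H.coeff (MY t₁ + MZ u₂ + MW v₂)) * (G.coeff (MX s₂) * H.coeff (MY t₁ + MZ u₁ + MW v₁)) := by ring
    rw [eA, eB, eC, eD] at hmnr
    have hfin : α * (c s₁ t₁ * (d u₁ v₁ * (c s₂ t₁ * d u₂ v₂))) = 0 := by
      linear_combination -hmnr
    exact mul_ne_zero hα (mul_ne_zero hc₁ (mul_ne_zero hd₁ hDval)) hfin

theorem Mon_apply_le_one (s : S) (t : T) (u : U) (v : V) (i : S ⊕ (T ⊕ (U ⊕ V))) :
    Mon s t u v i ≤ 1 := by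
  rcases i with s' | i
  · rw [Mon_apply_x]; split <;> omega
  rcases i with t' | i
  · rw [Mon_apply_y]; split <;> omega
  rcases i with u' | v'
  · rw [Mon_apply_z]; split <;> omega
  · rw [Mon_apply_w]; split <;> omega

theorem Mon_ne_zero (s : S) (t : T) (u : U) (v : V) : Mon s t u v ≠ 0 := by
  intro h
  have h1 := DFunLike.congr_fun h (Sum.inl s)
  rw [Mon_apply_x, if_pos rfl] at h1
  simp at h1

theorem nodecomp
    (c : S → T → ℂ) (d : U → V → ℂ)
    (χS : S → Prop) (χT : T → Prop) (χU : U → Prop) (χV : V → Prop)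
    (α : ℂ) (hα : α ≠ 0) (E : S → T → U → V → ℂ)
    (hE1 : ∀ s t u v, χS s → χT t → χU u → χV v → E s t u v = c s t * d u v * (1 - α))
    (hE0 : ∀ s t u v, ¬(χS s ∧ χT t ∧ χU u ∧ χV v) → E s t u v = c s t * d u v)
    (s₁ : S) (t₁ : T) (hs₁ : χS s₁) (ht₁ : χT t₁) (hc₁ : c s₁ t₁ ≠ 0)
    (u₁ : U) (v₁ : V) (hu₁ : χU u₁) (hv₁ : χV v₁) (hd₁ : d u₁ v₁ ≠ 0)
    (s₂ : S) (t₂ : T) (hs₂ : ¬ χS s₂) (hc₂ : c s₂ t₂ ≠ 0)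
    (s₃ : S) (t₃ : T) (ht₃ : ¬ χT t₃) (hc₃ : c s₃ t₃ ≠ 0)
    (u₂ : U) (v₂ : V) (hu₂ : ¬ χU u₂) (hd₂ : d u₂ v₂ ≠ 0)
    (u₃ : U) (v₃ : V) (hv₃ : ¬ χV v₃) (hd₃ : d u₃ v₃ ≠ 0)
    (P G H : MvPolynomial (S ⊕ (T ⊕ (U ⊕ V))) ℂ)
    (hP : P = ∑ s : S, ∑ t : T, ∑ u : U, ∑ v : V,
      MvPolynomial.monomial (Mon s t u v) (E s t u v))
    (hGn : ¬ ∃ a, G = MvPolynomial.C a)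
    (hHn : ¬ ∃ a, H = MvPolynomial.C a)
    (hdisj : Disjoint G.vars H.vars)
    (hPGH : P = G * H) : False := by
  classical
  have hm1 : P.coeff (Mon s₁ t₁ u₂ v₂) ≠ 0 := by
    rw [hP, coeff_bigsum, hE0 _ _ _ _ (fun h => hu₂ h.2.2.1)]
    exact mul_ne_zero hc₁ hd₂
  have hu : Sum.inl s₁ ∈ G.vars ∪ H.vars := by
    have hμ := hm1
    rw [hPGH, MvPolynomial.coeff_mul] at hμ
    obtain ⟨p, hpmem, hp⟩ := Finset.exists_ne_zero_of_sum_ne_zero hμ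
    have hsum := Finset.HasAntidiagonal.mem_antidiagonal.mp hpmem
    have h1 : G.coeff p.1 ≠ 0 := left_ne_zero_of_mul hp
    have h2 : H.coeff p.2 ≠ 0 := right_ne_zero_of_mul hp
    have hor : p.1 (Sum.inl s₁) ≠ 0 ∨ p.2 (Sum.inl s₁) ≠ 0 := by
      have h3 := DFunLike.congr_fun hsum (Sum.inl s₁)
      simp only [Finsupp.add_apply] at h3
      rw [Mon_apply_x, if_pos rfl] at h3
      omega
    rcases hor with h | h
    · exact Finset.mem_union_left _ ((MvPolynomial.mem_vars _).mpr
        ⟨p.1, MvPolynomial.mem_support_iff.mpr h1, Finsupp.mem_support_iff.mpr h⟩)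
    · exact Finset.mem_union_right _ ((MvPolynomial.mem_vars _).mpr
        ⟨p.2, MvPolynomial.mem_support_iff.mpr h2, Finsupp.mem_support_iff.mpr h⟩)
  rcases Finset.mem_union.mp hu with h | h
  · exact nosplit c d χS χT χU χV α hα E hE1 hE0 s₁ t₁ hs₁ ht₁ hc₁ u₁ v₁ hu₁ hv₁ hd₁
      s₂ t₂ hs₂ hc₂ s₃ t₃ ht₃ hc₃ u₂ v₂ hu₂ hd₂ u₃ v₃ hv₃ hd₃ P G H hP hHn hdisj hPGH h
  · exact nosplit c d χS χT χU χV α hα E hE1 hE0 s₁ t₁ hs₁ ht₁ hc₁ u₁ v₁ hu₁ hv₁ hd₁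
      s₂ t₂ hs₂ hc₂ s₃ t₃ ht₃ hc₃ u₂ v₂ hu₂ hd₂ u₃ v₃ hv₃ hd₃ P H G hP hGn
      hdisj.symm (by rw [hPGH, mul_comm]) h

theorem core
    (c : S → T → ℂ) (d : U → V → ℂ)
    (χS : S → Prop) (χT : T → Prop) (χU : U → Prop) (χV : V → Prop)
    (α : ℂ) (hα : α ≠ 0) (E : S → T → U → V → ℂ)
    (hE1 : ∀ s t u v, χS s → χT t → χU u → χV v → E s t u v = c s t * d u v * (1 - α))
    (hE0 : ∀ s t u v, ¬(χS s ∧ χT t ∧ χU u ∧ χV v) → E s t u v = c s t * d u v)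
    (s₁ : S) (t₁ : T) (hs₁ : χS s₁) (ht₁ : χT t₁) (hc₁ : c s₁ t₁ ≠ 0)
    (u₁ : U) (v₁ : V) (hu₁ : χU u₁) (hv₁ : χV v₁) (hd₁ : d u₁ v₁ ≠ 0)
    (s₂ : S) (t₂ : T) (hs₂ : ¬ χS s₂) (hc₂ : c s₂ t₂ ≠ 0)
    (s₃ : S) (t₃ : T) (ht₃ : ¬ χT t₃) (hc₃ : c s₃ t₃ ≠ 0)
    (u₂ : U) (v₂ : V) (hu₂ : ¬ χU u₂) (hd₂ : d u₂ v₂ ≠ 0)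
    (u₃ : U) (v₃ : V) (hv₃ : ¬ χV v₃) (hd₃ : d u₃ v₃ ≠ 0)
    (P : MvPolynomial (S ⊕ (T ⊕ (U ⊕ V))) ℂ)
    (hP : P = ∑ s : S, ∑ t : T, ∑ u : U, ∑ v : V,
      MvPolynomial.monomial (Mon s t u v) (E s t u v)) :
    Irreducible P ∧ ¬ Decomposable P := by
  classical
  have hm1 : P.coeff (Mon s₁ t₁ u₂ v₂) ≠ 0 := by
    rw [hP, coeff_bigsum, hE0 _ _ _ _ (fun h => hu₂ h.2.2.1)]
    exact mul_ne_zero hc₁ hd₂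
  have hPne : P ≠ 0 := by
    intro h0
    rw [h0] at hm1
    simp at hm1
  have hPnotC : ¬ ∃ a, P = MvPolynomial.C a := by
    rintro ⟨a, ha⟩
    rw [ha, MvPolynomial.coeff_C,
      if_neg (fun hh => Mon_ne_zero s₁ t₁ u₂ v₂ hh.symm)] at hm1
    exact hm1 rfl
  have hdeg1 : ∀ i, P.degreeOf i ≤ 1 := by
    intro i
    rw [MvPolynomial.degreeOf_eq_sup]
    apply Finset.sup_le
    intro m hm
    obtain ⟨s, t, u, v, rfl⟩ := by
      rw [hP] at hm
      exact shape_bigsum E m (MvPolynomial.mem_support_iff.mp hm)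
    exact Mon_apply_le_one s t u v i
  have nonconst_of_nonunit : ∀ Q : MvPolynomial (S ⊕ (T ⊕ (U ⊕ V))) ℂ,
      ¬ IsUnit Q → Q ≠ 0 → ¬ ∃ a, Q = MvPolynomial.C a := by
    rintro Q hQu hQ0 ⟨a, rfl⟩
    have ha : a ≠ 0 := fun h => hQ0 (by rw [h, map_zero])
    exact hQu (IsUnit.of_mul_eq_one (MvPolynomial.C a⁻¹)
      (by rw [← map_mul, mul_inv_cancel₀ ha, map_one]))
  have hnodec : ¬ Decomposable P := by
    rintro ⟨g, h, hgn, hhn, hdisj, hfact⟩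
    exact nodecomp c d χS χT χU χV α hα E hE1 hE0 s₁ t₁ hs₁ ht₁ hc₁ u₁ v₁ hu₁ hv₁ hd₁
      s₂ t₂ hs₂ hc₂ s₃ t₃ ht₃ hc₃ u₂ v₂ hu₂ hd₂ u₃ v₃ hv₃ hd₃ P g h hP hgn hhn hdisj hfact
  refine ⟨⟨?_, ?_⟩, hnodec⟩
  · -- P is not a unit
    intro hu
    obtain ⟨Q, hQ⟩ := hu.exists_right_inv
    have hQ0 : Q ≠ 0 := by
      intro h0; rw [h0, mul_zero] at hQ; exact one_ne_zero hQ.symm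
    apply hPnotC
    apply Stmt6Helpers.eq_C_of_degreeOf_eq_zero
    intro i
    have h1 := Stmt6Helpers.degreeOf_mul_eq_of_ne_zero hPne hQ0 i
    rw [hQ] at h1
    have h2 : (1 : MvPolynomial (S ⊕ (T ⊕ (U ⊕ V))) ℂ).degreeOf i = 0 := by
      rw [← MvPolynomial.C_1, MvPolynomial.degreeOf_C]
    omega
  · -- any factorization has a unit factor
    intro G H hGH
    by_contra hcon
    push_neg at hcon
    obtain ⟨hGu, hHu⟩ := hcon
    have hG0 : G ≠ 0 := fun h0 => hPne (by rw [hGH, h0, zero_mul])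
    have hH0 : H ≠ 0 := fun h0 => hPne (by rw [hGH, h0, mul_zero])
    have hGn := nonconst_of_nonunit G hGu hG0
    have hHn := nonconst_of_nonunit H hHu hH0
    have hdisj : Disjoint G.vars H.vars := by
      rw [Finset.disjoint_left]
      intro i hiG hiH
      obtain ⟨m1, hm1', hi1⟩ := (MvPolynomial.mem_vars i).mp hiG
      obtain ⟨m2, hm2', hi2⟩ := (MvPolynomial.mem_vars i).mp hiH
      have d1 : 1 ≤ G.degreeOf i := by
        have := MvPolynomial.monomial_le_degreeOf i hm1'
        have := Finsupp.mem_support_iff.mp hi1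
        omega
      have d2 : 1 ≤ H.degreeOf i := by
        have := MvPolynomial.monomial_le_degreeOf i hm2'
        have := Finsupp.mem_support_iff.mp hi2
        omega
      have h3 := Stmt6Helpers.degreeOf_mul_eq_of_ne_zero hG0 hH0 i
      rw [← hGH] at h3
      have h4 := hdeg1 i
      omega
    exact nodecomp c d χS χT χU χV α hα E hE1 hE0 s₁ t₁ hs₁ ht₁ hc₁ u₁ v₁ hu₁ hv₁ hd₁
      s₂ t₂ hs₂ hc₂ s₃ t₃ ht₃ hc₃ u₂ v₂ hu₂ hd₂ u₃ v₃ hv₃ hd₃ P G H hP hGn hHn hdisj hGH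

end Stmt6Core



namespace Stmt6Final

open MvPolynomial

lemma chi_mk {k₁ k₂ : ℕ} (x : Fin k₂ → Bool) :
    ∀ i : Fin k₁, Fin.append (fun _ => true) x (Fin.castAdd k₂ i) = true := fun i => by
  rw [Fin.append_left]

lemma not_chi {k₁ k₂ : ℕ} (a : Fin k₁ → Bool) (b : Fin k₂ → Bool) (h : a ≠ fun _ => true) :
    ¬ (∀ i : Fin k₁, Fin.append a b (Fin.castAdd k₂ i) = true) := by
  intro hall
  apply h
  funext i
  rw [← Fin.append_left a b i]
  exact hall i

lemma sum_append1 (k₁ k₂ : ℕ) {M : Type*} [AddCommMonoid M]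
    (f : (Fin (k₁ + k₂) → Bool) → M) :
    ∑ x : Fin k₂ → Bool, f (Fin.append (fun _ => true) x)
      = ∑ s : Fin (k₁ + k₂) → Bool,
          if (∀ i : Fin k₁, s (Fin.castAdd k₂ i) = true) then f s else 0 := by
  classical
  rw [Finset.sum_ite, Finset.sum_const_zero, add_zero]
  refine Finset.sum_nbij' (i := fun x => Fin.append (fun _ => true) x)
    (j := fun s => fun i => s (Fin.natAdd k₁ i)) ?_ ?_ ?_ ?_ ?_
  · intro a _
    simp only [Finset.mem_filter, Finset.mem_univ, true_and]
    exact chi_mk a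
  · intro a _
    exact Finset.mem_univ _
  · intro a _
    funext i
    rw [Fin.append_right]
  · intro s hs
    rw [Finset.mem_filter] at hs
    funext j
    refine Fin.addCases (fun i => ?_) (fun i => ?_) j
    · rw [Fin.append_left]
      exact (hs.2 i).symm
    · rw [Fin.append_right]
  · intro a _
    rfl

lemma prodMon {S T U V : Type*} (a b : ℂ) (s : S) (t : T) (u : U) (v : V) :
    (MvPolynomial.C a * MvPolynomial.X (Sum.inl s) *
      MvPolynomial.X (Sum.inr (Sum.inl t))) *
    (MvPolynomial.C b * MvPolynomial.X (Sum.inr (Sum.inr (Sum.inl u))) *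
      MvPolynomial.X (Sum.inr (Sum.inr (Sum.inr v))))
    = MvPolynomial.monomial (Stmt6Core.Mon s t u v) (a * b) := by
  have hX : ∀ p : S ⊕ (T ⊕ (U ⊕ V)), (MvPolynomial.X p : MvPolynomial _ ℂ)
      = MvPolynomial.monomial (Finsupp.single p 1) 1 := fun p => rfl
  rw [hX, hX, hX, hX, MvPolynomial.C_mul_monomial, MvPolynomial.C_mul_monomial,
    MvPolynomial.monomial_mul, MvPolynomial.monomial_mul, MvPolynomial.monomial_mul]
  congr 1
  · rw [Stmt6Core.Mon_def]
    abel
  · ring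

lemma prodMon2 {S T U V : Type*} (a e : ℂ) (s : S) (t : T) (u : U) (v : V) :
    MvPolynomial.C a * (MvPolynomial.C e * MvPolynomial.X (Sum.inl s) *
      MvPolynomial.X (Sum.inr (Sum.inl t)) *
      MvPolynomial.X (Sum.inr (Sum.inr (Sum.inl u))) *
      MvPolynomial.X (Sum.inr (Sum.inr (Sum.inr v))))
    = MvPolynomial.monomial (Stmt6Core.Mon s t u v) (a * e) := by
  have hX : ∀ p : S ⊕ (T ⊕ (U ⊕ V)), (MvPolynomial.X p : MvPolynomial _ ℂ)
      = MvPolynomial.monomial (Finsupp.single p 1) 1 := fun p => rfl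
  rw [hX, hX, hX, hX, MvPolynomial.C_mul_monomial,
    MvPolynomial.monomial_mul, MvPolynomial.monomial_mul, MvPolynomial.monomial_mul,
    MvPolynomial.C_mul_monomial]
  congr 1
  ring

lemma sum4_mul {A B C' D' : Type*} [Fintype A] [Fintype B] [Fintype C'] [Fintype D']
    {M : Type*} [NonUnitalNonAssocSemiring M] (f : A → B → M) (g : C' → D' → M) :
    (∑ a : A, ∑ b : B, f a b) * (∑ e : C', ∑ j : D', g e j)
      = ∑ a : A, ∑ b : B, ∑ e : C', ∑ j : D', f a b * g e j := by
  rw [Finset.sum_mul_sum]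
  refine Finset.sum_congr rfl fun a _ => ?_
  refine Eq.trans (Finset.sum_congr rfl fun e _ => Finset.sum_mul_sum _ _ _ _) ?_
  exact Finset.sum_comm

lemma sum_append4 (k₁ k₂ l₁ l₂ m₁ m₂ n₁ n₂ : ℕ) {M : Type*} [AddCommMonoid M]
    (F : (Fin (k₁+k₂) → Bool) → (Fin (l₁+l₂) → Bool) → (Fin (m₁+m₂) → Bool) →
      (Fin (n₁+n₂) → Bool) → M) :
    ∑ a : Fin k₂ → Bool, ∑ b : Fin l₂ → Bool, ∑ e : Fin m₂ → Bool, ∑ f : Fin n₂ → Bool,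
      F (Fin.append (fun _ => true) a) (Fin.append (fun _ => true) b)
        (Fin.append (fun _ => true) e) (Fin.append (fun _ => true) f)
    = ∑ s : Fin (k₁+k₂) → Bool, ∑ t : Fin (l₁+l₂) → Bool, ∑ u : Fin (m₁+m₂) → Bool,
        ∑ v : Fin (n₁+n₂) → Bool,
        if (∀ i : Fin k₁, s (Fin.castAdd k₂ i) = true)
            ∧ (∀ i : Fin l₁, t (Fin.castAdd l₂ i) = true)
            ∧ (∀ i : Fin m₁, u (Fin.castAdd m₂ i) = true)
            ∧ (∀ i : Fin n₁, v (Fin.castAdd n₂ i) = true)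
        then F s t u v else 0 := by
  classical
  refine Eq.trans (sum_append1 k₁ k₂ (fun s => ∑ b : Fin l₂ → Bool, ∑ e : Fin m₂ → Bool,
    ∑ f : Fin n₂ → Bool, F s (Fin.append (fun _ => true) b)
      (Fin.append (fun _ => true) e) (Fin.append (fun _ => true) f))) ?_
  refine Finset.sum_congr rfl fun s _ => ?_
  by_cases hs : ∀ i : Fin k₁, s (Fin.castAdd k₂ i) = true
  · rw [if_pos hs]
    refine Eq.trans (sum_append1 l₁ l₂ (fun t => ∑ e : Fin m₂ → Bool,
      ∑ f : Fin n₂ → Bool, F s t (Fin.append (fun _ => true) e)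
        (Fin.append (fun _ => true) f))) ?_
    refine Finset.sum_congr rfl fun t _ => ?_
    by_cases ht : ∀ i : Fin l₁, t (Fin.castAdd l₂ i) = true
    · rw [if_pos ht]
      refine Eq.trans (sum_append1 m₁ m₂ (fun u => ∑ f : Fin n₂ → Bool,
        F s t u (Fin.append (fun _ => true) f))) ?_
      refine Finset.sum_congr rfl fun u _ => ?_
      by_cases hu : ∀ i : Fin m₁, u (Fin.castAdd m₂ i) = true
      · rw [if_pos hu]
        refine Eq.trans (sum_append1 n₁ n₂ (fun v => F s t u v)) ?_
        refine Finset.sum_congr rfl fun v _ => ?_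
        by_cases hv : ∀ i : Fin n₁, v (Fin.castAdd n₂ i) = true
        · rw [if_pos hv, if_pos ⟨hs, ht, hu, hv⟩]
        · rw [if_neg hv, if_neg (fun hh => hv hh.2.2.2)]
      · rw [if_neg hu]
        exact (Finset.sum_eq_zero fun v _ => by
          rw [if_neg (fun hh => hu hh.2.2.1)]).symm
    · rw [if_neg ht]
      exact (Finset.sum_eq_zero fun u _ => Finset.sum_eq_zero fun v _ => by
        rw [if_neg (fun hh => ht hh.2.1)]).symm
  · rw [if_neg hs]
    exact (Finset.sum_eq_zero fun t _ => Finset.sum_eq_zero fun u _ =>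
      Finset.sum_eq_zero fun v _ => by rw [if_neg (fun hh => hs hh.1)]).symm


end Stmt6Final

open MvPolynomial in
theorem stmt6 (k₁ k₂ l₁ l₂ m₁ m₂ n₁ n₂ : ℕ)
    (hk : 1 ≤ k₁) (hl : 1 ≤ l₁) (hm : 1 ≤ m₁) (hn : 1 ≤ n₁)
    (c : (Fin (k₁ + k₂) → Bool) → (Fin (l₁ + l₂) → Bool) → ℂ)
    (d : (Fin (m₁ + m₂) → Bool) → (Fin (n₁ + n₂) → Bool) → ℂ)
    (hc1 : ∃ (s₂ : Fin k₂ → Bool) (t₂ : Fin l₂ → Bool),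
      c (Fin.append (fun _ => true) s₂) (Fin.append (fun _ => true) t₂) ≠ 0)
    (hd1 : ∃ (u₂ : Fin m₂ → Bool) (v₂ : Fin n₂ → Bool),
      d (Fin.append (fun _ => true) u₂) (Fin.append (fun _ => true) v₂) ≠ 0)
    (hc2 : ∃ (s₁ : Fin k₁ → Bool) (s₂ : Fin k₂ → Bool) (t : Fin (l₁ + l₂) → Bool),
      s₁ ≠ (fun _ => true) ∧ c (Fin.append s₁ s₂) t ≠ 0)
    (hc3 : ∃ (s : Fin (k₁ + k₂) → Bool) (t₁ : Fin l₁ → Bool) (t₂ : Fin l₂ → Bool),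
      t₁ ≠ (fun _ => true) ∧ c s (Fin.append t₁ t₂) ≠ 0)
    (hd2 : ∃ (u₁ : Fin m₁ → Bool) (u₂ : Fin m₂ → Bool) (v : Fin (n₁ + n₂) → Bool),
      u₁ ≠ (fun _ => true) ∧ d (Fin.append u₁ u₂) v ≠ 0)
    (hd3 : ∃ (u : Fin (m₁ + m₂) → Bool) (v₁ : Fin n₁ → Bool) (v₂ : Fin n₂ → Bool),
      v₁ ≠ (fun _ => true) ∧ d u (Fin.append v₁ v₂) ≠ 0)
    (α : ℂ) (hα : α ≠ 0)
    (P : MvPolynomial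
      ((Fin (k₁ + k₂) → Bool) ⊕ (Fin (l₁ + l₂) → Bool) ⊕
        (Fin (m₁ + m₂) → Bool) ⊕ (Fin (n₁ + n₂) → Bool)) ℂ)
    (hP : P =
      (∑ s : Fin (k₁ + k₂) → Bool, ∑ t : Fin (l₁ + l₂) → Bool,
          MvPolynomial.C (c s t) * MvPolynomial.X (Sum.inl s) *
            MvPolynomial.X (Sum.inr (Sum.inl t))) *
        (∑ u : Fin (m₁ + m₂) → Bool, ∑ v : Fin (n₁ + n₂) → Bool,
          MvPolynomial.C (d u v) * MvPolynomial.X (Sum.inr (Sum.inr (Sum.inl u))) *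
            MvPolynomial.X (Sum.inr (Sum.inr (Sum.inr v)))) -
      MvPolynomial.C α *
        ∑ s₂ : Fin k₂ → Bool, ∑ t₂ : Fin l₂ → Bool, ∑ u₂ : Fin m₂ → Bool, ∑ v₂ : Fin n₂ → Bool,
          MvPolynomial.C
              (c (Fin.append (fun _ => true) s₂) (Fin.append (fun _ => true) t₂) *
                d (Fin.append (fun _ => true) u₂) (Fin.append (fun _ => true) v₂)) *
            MvPolynomial.X (Sum.inl (Fin.append (fun _ => true) s₂)) *
            MvPolynomial.X (Sum.inr (Sum.inl (Fin.append (fun _ => true) t₂))) *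
            MvPolynomial.X (Sum.inr (Sum.inr (Sum.inl (Fin.append (fun _ => true) u₂)))) *
            MvPolynomial.X (Sum.inr (Sum.inr (Sum.inr (Fin.append (fun _ => true) v₂))))) :
    Irreducible P ∧ ¬ Decomposable P := by
  classical
  obtain ⟨s₂', t₂', hc1'⟩ := hc1
  obtain ⟨u₂', v₂', hd1'⟩ := hd1
  obtain ⟨sa, sb, ta, hsa, hc2'⟩ := hc2
  obtain ⟨sc, tb, tc, htb, hc3'⟩ := hc3
  obtain ⟨ua, ub, va, hua, hd2'⟩ := hd2
  obtain ⟨uc, vb, vc, hvb, hd3'⟩ := hd3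
  refine Stmt6Core.core c d
    (fun s => ∀ i : Fin k₁, s (Fin.castAdd k₂ i) = true)
    (fun t => ∀ i : Fin l₁, t (Fin.castAdd l₂ i) = true)
    (fun u => ∀ i : Fin m₁, u (Fin.castAdd m₂ i) = true)
    (fun v => ∀ i : Fin n₁, v (Fin.castAdd n₂ i) = true)
    α hα
    (fun s t u v => c s t * d u v - α *
      (if (∀ i : Fin k₁, s (Fin.castAdd k₂ i) = true)
          ∧ (∀ i : Fin l₁, t (Fin.castAdd l₂ i) = true)
          ∧ (∀ i : Fin m₁, u (Fin.castAdd m₂ i) = true)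
          ∧ (∀ i : Fin n₁, v (Fin.castAdd n₂ i) = true)
        then c s t * d u v else 0))
    ?_ ?_
    (Fin.append (fun _ => true) s₂') (Fin.append (fun _ => true) t₂')
    (Stmt6Final.chi_mk s₂') (Stmt6Final.chi_mk t₂') hc1'
    (Fin.append (fun _ => true) u₂') (Fin.append (fun _ => true) v₂')
    (Stmt6Final.chi_mk u₂') (Stmt6Final.chi_mk v₂') hd1'
    (Fin.append sa sb) ta (Stmt6Final.not_chi sa sb hsa) hc2'
    sc (Fin.append tb tc) (Stmt6Final.not_chi tb tc htb) hc3'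
    (Fin.append ua ub) va (Stmt6Final.not_chi ua ub hua) hd2'
    uc (Fin.append vb vc) (Stmt6Final.not_chi vb vc hvb) hd3'
    P ?_
  · intro s t u v hs ht hu hv
    rw [if_pos ⟨hs, ht, hu, hv⟩]
    ring
  · intro s t u v h
    rw [if_neg h]
    ring
  · rw [hP]
    have h1 : (∑ s : Fin (k₁ + k₂) → Bool, ∑ t : Fin (l₁ + l₂) → Bool,
          MvPolynomial.C (c s t) * MvPolynomial.X (Sum.inl s) *
            MvPolynomial.X (Sum.inr (Sum.inl t))) *
        (∑ u : Fin (m₁ + m₂) → Bool, ∑ v : Fin (n₁ + n₂) → Bool,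
          MvPolynomial.C (d u v) * MvPolynomial.X (Sum.inr (Sum.inr (Sum.inl u))) *
            MvPolynomial.X (Sum.inr (Sum.inr (Sum.inr v))))
        = ∑ s : Fin (k₁ + k₂) → Bool, ∑ t : Fin (l₁ + l₂) → Bool,
            ∑ u : Fin (m₁ + m₂) → Bool, ∑ v : Fin (n₁ + n₂) → Bool,
            MvPolynomial.monomial (Stmt6Core.Mon s t u v) (c s t * d u v) := by
      rw [Stmt6Final.sum4_mul]
      exact Finset.sum_congr rfl fun s _ => Finset.sum_congr rfl fun t _ =>
        Finset.sum_congr rfl fun u _ => Finset.sum_congr rfl fun v _ =>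
          Stmt6Final.prodMon (c s t) (d u v) s t u v
    have h2 : MvPolynomial.C α *
        (∑ s₂ : Fin k₂ → Bool, ∑ t₂ : Fin l₂ → Bool, ∑ u₂ : Fin m₂ → Bool, ∑ v₂ : Fin n₂ → Bool,
          MvPolynomial.C
              (c (Fin.append (fun _ => true) s₂) (Fin.append (fun _ => true) t₂) *
                d (Fin.append (fun _ => true) u₂) (Fin.append (fun _ => true) v₂)) *
            MvPolynomial.X (Sum.inl (Fin.append (fun _ => true) s₂)) *
            MvPolynomial.X (Sum.inr (Sum.inl (Fin.append (fun _ => true) t₂))) *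
            MvPolynomial.X (Sum.inr (Sum.inr (Sum.inl (Fin.append (fun _ => true) u₂)))) *
            MvPolynomial.X (Sum.inr (Sum.inr (Sum.inr (Fin.append (fun _ => true) v₂)))))
        = ∑ s : Fin (k₁ + k₂) → Bool, ∑ t : Fin (l₁ + l₂) → Bool,
            ∑ u : Fin (m₁ + m₂) → Bool, ∑ v : Fin (n₁ + n₂) → Bool,
            if (∀ i : Fin k₁, s (Fin.castAdd k₂ i) = true)
                ∧ (∀ i : Fin l₁, t (Fin.castAdd l₂ i) = true)
                ∧ (∀ i : Fin m₁, u (Fin.castAdd m₂ i) = true)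
                ∧ (∀ i : Fin n₁, v (Fin.castAdd n₂ i) = true)
            then MvPolynomial.monomial (Stmt6Core.Mon s t u v) (α * (c s t * d u v))
            else 0 := by
      refine Eq.trans ?_ (Stmt6Final.sum_append4 k₁ k₂ l₁ l₂ m₁ m₂ n₁ n₂
        (fun s t u v => MvPolynomial.monomial (Stmt6Core.Mon s t u v) (α * (c s t * d u v))))
      simp only [Finset.mul_sum]
      exact Finset.sum_congr rfl fun a _ => Finset.sum_congr rfl fun b _ =>
        Finset.sum_congr rfl fun e _ => Finset.sum_congr rfl fun f _ =>
          Stmt6Final.prodMon2 α _ _ _ _ _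
    rw [h1, h2]
    simp only [← Finset.sum_sub_distrib]
    refine Finset.sum_congr rfl fun s _ => Finset.sum_congr rfl fun t _ =>
      Finset.sum_congr rfl fun u _ => Finset.sum_congr rfl fun v _ => ?_
    by_cases h : (∀ i : Fin k₁, s (Fin.castAdd k₂ i) = true)
        ∧ (∀ i : Fin l₁, t (Fin.castAdd l₂ i) = true)
        ∧ (∀ i : Fin m₁, u (Fin.castAdd m₂ i) = true)
        ∧ (∀ i : Fin n₁, v (Fin.castAdd n₂ i) = true)
    · rw [if_pos h, if_pos h, ← map_sub]
    · rw [if_neg h, if_neg h, sub_zero, mul_zero, sub_zero]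
end

section
/- For every n ≥ 2 and every m ≥ 0, there is no depth-1 QAC circuit on 1+n+m qubits that weakly computes the parity function ⊕_n. -/
open scoped BigOperators

/-- The state space of `N` qubits: amplitudes indexed by bit strings of length `N`. -/
abbrev QState (N : ℕ) := (Fin N → Bool) → ℂ

/-- A unit vector (state vector): Euclidean norm 1. -/
def UnitVec {N : ℕ} (ψ : QState N) : Prop := ∑ x, ‖ψ x‖ ^ 2 = 1

/-- The C-SIGN gate on the qubits in `S`: flips the sign of the amplitude exactly
when all bits in `S` are `1`. -/
noncomputable def czGate {N : ℕ} (S : Finset (Fin N)) (ψ : QState N) : QState N :=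
  fun x => if ∀ i ∈ S, x i = true then -ψ x else ψ x

/-- A layer of C-SIGN gates on pairwise disjoint sets of qubits, applied in sequence. -/
noncomputable def czLayerAct {N : ℕ} (gs : List (Finset (Fin N))) (ψ : QState N) : QState N :=
  gs.foldr czGate ψ

/-- Interpret a `Bool` as an index into a `2 × 2` matrix. -/
def bitIdx (b : Bool) : Fin 2 := if b then 1 else 0

/-- A layer of single-qubit gates, one `2 × 2` matrix per qubit, acting on the register. -/
noncomputable def layerAct {N : ℕ} (U : Fin N → Matrix (Fin 2) (Fin 2) ℂ) (ψ : QState N) :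
    QState N :=
  fun x => ∑ y : Fin N → Bool, (∏ j, U j (bitIdx (x j)) (bitIdx (y j))) * ψ y

/-- A depth-`d` QAC circuit on `N` qubits: `d + 1` single-qubit layers
`L 0, …, L d` interleaved with `d` CZ layers `Z 0, …, Z (d-1)`;
the circuit is `L d ∘ Z (d-1) ∘ L (d-1) ∘ ⋯ ∘ Z 0 ∘ L 0`. -/
structure QAC (N d : ℕ) where
  /-- the single-qubit layers (a `2 × 2` unitary for each qubit) -/
  L : Fin (d + 1) → Fin N → Matrix (Fin 2) (Fin 2) ℂ
  hL : ∀ i j, L i j ∈ Matrix.unitaryGroup (Fin 2) ℂ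
  /-- the CZ layers: each is a list of pairwise disjoint sets of qubits -/
  Z : Fin d → List (Finset (Fin N))
  hZ : ∀ i, (Z i).Pairwise (fun S T => Disjoint S T)

/-- The action of a QAC circuit on a state. -/
noncomputable def QAC.act {N d : ℕ} (C : QAC N d) (ψ : QState N) : QState N :=
  layerAct (C.L (Fin.last d))
    ((List.finRange d).foldl
      (fun φ i => czLayerAct (C.Z i) (layerAct (C.L i.castSucc) φ)) ψ)

/-- The target qubit (qubit `0`) in a register of `1 + n + m` qubits. -/
def tgt (n m : ℕ) : Fin (1 + n + m) := ⟨0, by omega⟩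

/-- The `i`-th input qubit (qubit `1 + i`). -/
def inp (n m : ℕ) (i : Fin n) : Fin (1 + n + m) := ⟨1 + i.1, by have := i.2; omega⟩

/-- The `j`-th ancilla qubit (qubit `1 + n + j`). -/
def anc (n m : ℕ) (j : Fin m) : Fin (1 + n + m) := ⟨1 + n + j.1, by have := j.2; omega⟩

/-- The `j`-th non-target qubit (qubit `1 + j`). -/
def nontgt (n m : ℕ) (j : Fin (n + m)) : Fin (1 + n + m) := ⟨1 + j.1, by have := j.2; omega⟩

/-- The set of input qubits. -/
def inputs (n m : ℕ) : Finset (Fin (1 + n + m)) := Finset.univ.image (inp n m)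

/-- The parity (mod-2 bit-sum) of a bit string, as a `Bool`. -/
def parityB {n : ℕ} (x : Fin n → Bool) : Bool :=
  decide ((∑ i, if x i then 1 else 0 : ℕ) % 2 = 1)

/-- The state `|t⟩ ⊗ |x⟩ ⊗ α` of the register. -/
noncomputable def inState (n m : ℕ) (t : Bool) (x : Fin n → Bool) (α : QState m) :
    QState (1 + n + m) :=
  fun y => (if y (tgt n m) = t ∧ (∀ i, y (inp n m i) = x i) then (1 : ℂ) else 0) *
    α (fun j => y (anc n m j))

/-- `C` `α`-computes `⊕ₙ`: for each classical input `x`, the circuit maps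
`|0⟩ ⊗ |x⟩ ⊗ α` to `|⊕x⟩ ⊗ φₓ` for some unit vector `φₓ` of the non-target qubits. -/
noncomputable def AlphaComputes (n m : ℕ) {d : ℕ} (C : QAC (1 + n + m) d) (α : QState m) :
    Prop :=
  ∀ x : Fin n → Bool, ∃ φ : QState (n + m), UnitVec φ ∧
    ∀ y : Fin (1 + n + m) → Bool,
      C.act (inState n m false x α) y =
        (if y (tgt n m) = parityB x then (1 : ℂ) else 0) * φ (fun j => y (nontgt n m j))

/-- `C` weakly computes `⊕ₙ`: it `α`-computes `⊕ₙ` for some unit ancilla state `α`. -/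
noncomputable def WeaklyComputes (n m : ℕ) {d : ℕ} (C : QAC (1 + n + m) d) : Prop :=
  ∃ α : QState m, UnitVec α ∧ AlphaComputes n m C α

/-- The all-zeros computational basis state of the ancillas. -/
noncomputable def zeroAnc (m : ℕ) : QState m :=
  fun z => if z = (fun _ => false) then 1 else 0

/-- `C` computes `⊕ₙ`: it `α`-computes `⊕ₙ` with the all-zeros ancilla state. -/
noncomputable def Computes (n m : ℕ) {d : ℕ} (C : QAC (1 + n + m) d) : Prop :=
  AlphaComputes n m C (zeroAnc m)

/-- A `2 × 2` matrix is semiclassical if it has two zero entries. -/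
def Semiclassical (U : Matrix (Fin 2) (Fin 2) ℂ) : Prop :=
  ∃ p q : Fin 2 × Fin 2, p ≠ q ∧ U p.1 p.2 = 0 ∧ U q.1 q.2 = 0


namespace ParityProof

open Finset

lemma bitIdx_inj : Function.Injective bitIdx := by decide

lemma bitIdx_surj : ∀ r : Fin 2, ∃ b, bitIdx b = r := by decide

def boolFin : Bool ≃ Fin 2 where
  toFun := bitIdx
  invFun i := decide (i = 1)
  left_inv := by decide
  right_inv := by decide

lemma sum_bool_bitIdx (f : Fin 2 → ℂ) : ∑ b : Bool, f (bitIdx b) = ∑ i : Fin 2, f i :=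
  boolFin.sum_comp f

lemma sum_pi_prod {N : ℕ} (f : Fin N → Bool → ℂ) :
    ∑ y : Fin N → Bool, ∏ j, f j (y j) = ∏ j, ∑ b, f j b := by
  rw [Finset.prod_univ_sum, Fintype.piFinset_univ]

lemma layerAct_comp {N : ℕ} (U V : Fin N → Matrix (Fin 2) (Fin 2) ℂ) (ψ : QState N) :
    layerAct U (layerAct V ψ) = layerAct (fun j => U j * V j) ψ := by
  funext x
  simp only [layerAct, Finset.mul_sum]
  rw [Finset.sum_comm]
  refine Finset.sum_congr rfl (fun z _ => ?_)
  have h1 : ∀ y : Fin N → Bool,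
      (∏ j, U j (bitIdx (x j)) (bitIdx (y j))) *
        ((∏ j, V j (bitIdx (y j)) (bitIdx (z j))) * ψ z)
      = (∏ j, U j (bitIdx (x j)) (bitIdx (y j)) * V j (bitIdx (y j)) (bitIdx (z j))) * ψ z := by
    intro y; rw [Finset.prod_mul_distrib, mul_assoc]
  rw [Finset.sum_congr rfl (fun y _ => h1 y), ← Finset.sum_mul,
    sum_pi_prod (fun j b => U j (bitIdx (x j)) (bitIdx b) * V j (bitIdx b) (bitIdx (z j)))]
  congr 1
  refine Finset.prod_congr rfl (fun j _ => ?_)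
  rw [Matrix.mul_apply, ← sum_bool_bitIdx (fun r => U j (bitIdx (x j)) r * V j r (bitIdx (z j)))]

lemma prod_delta {N : ℕ} (x y : Fin N → Bool) :
    (∏ j, (1 : Matrix (Fin 2) (Fin 2) ℂ) (bitIdx (x j)) (bitIdx (y j))) =
      if x = y then 1 else 0 := by
  by_cases h : x = y
  · subst h; simp [Matrix.one_apply]
  · rw [if_neg h]
    obtain ⟨j, hj⟩ := Function.ne_iff.mp h
    exact Finset.prod_eq_zero (Finset.mem_univ j)
      (Matrix.one_apply_ne (fun e => hj (bitIdx_inj e)))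

lemma layerAct_one {N : ℕ} (ψ : QState N) :
    layerAct (fun _ => (1 : Matrix (Fin 2) (Fin 2) ℂ)) ψ = ψ := by
  funext x
  simp only [layerAct, prod_delta, ite_mul, one_mul, zero_mul]
  simp [Finset.sum_ite_eq]

lemma layerAct_star {N : ℕ} (U : Fin N → Matrix (Fin 2) (Fin 2) ℂ)
    (hU : ∀ j, U j ∈ Matrix.unitaryGroup (Fin 2) ℂ) (ψ : QState N) :
    layerAct (fun j => star (U j)) (layerAct U ψ) = ψ := by
  rw [layerAct_comp]
  have h : (fun j => star (U j) * U j) = fun _ : Fin N => (1 : Matrix (Fin 2) (Fin 2) ℂ) :=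
    funext fun j => Matrix.mem_unitaryGroup_iff'.mp (hU j)
  rw [h, layerAct_one]

lemma layerAct_ne_zero {N : ℕ} (U : Fin N → Matrix (Fin 2) (Fin 2) ℂ)
    (hU : ∀ j, U j ∈ Matrix.unitaryGroup (Fin 2) ℂ) (ψ : QState N)
    (h : ∃ v, ψ v ≠ 0) : ∃ v, layerAct U ψ v ≠ 0 := by
  by_contra h0
  push_neg at h0
  obtain ⟨v, hv⟩ := h
  apply hv
  have h2 := layerAct_star U hU ψ
  have h3 : layerAct U ψ = fun _ => 0 := funext h0
  rw [h3] at h2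
  rw [← h2]
  simp [layerAct]

lemma unitary_entries {M : Matrix (Fin 2) (Fin 2) ℂ}
    (hM : M ∈ Matrix.unitaryGroup (Fin 2) ℂ) (i j : Fin 2) :
    (star M * M) i j = (1 : Matrix (Fin 2) (Fin 2) ℂ) i j := by
  rw [Matrix.mem_unitaryGroup_iff'.mp hM]

lemma unitary_col_ne {M : Matrix (Fin 2) (Fin 2) ℂ}
    (hM : M ∈ Matrix.unitaryGroup (Fin 2) ℂ) (c : Fin 2) : ∃ r, M r c ≠ 0 := by
  by_contra h
  push_neg at h
  have h2 := unitary_entries hM c c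
  rw [Matrix.mul_apply, Matrix.one_apply_eq] at h2
  simp only [Matrix.star_apply, h, mul_zero, Finset.sum_const_zero] at h2
  exact zero_ne_one h2

lemma unitary_col_orth {M : Matrix (Fin 2) (Fin 2) ℂ}
    (hM : M ∈ Matrix.unitaryGroup (Fin 2) ℂ) :
    star (M 0 0) * M 0 1 + star (M 1 0) * M 1 1 = 0 := by
  have h2 := unitary_entries hM 0 1
  rw [Matrix.mul_apply, Matrix.one_apply_ne (by decide)] at h2
  simpa [Matrix.star_apply, Fin.sum_univ_two] using h2

end ParityProof

namespace ParityProof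

noncomputable def sgn {N : ℕ} (gs : List (Finset (Fin N))) (y : Fin N → Bool) : ℂ :=
  (gs.map (fun S => if ∀ i ∈ S, y i = true then (-1 : ℂ) else 1)).prod

lemma sgn_nil {N : ℕ} (y : Fin N → Bool) : sgn ([] : List (Finset (Fin N))) y = 1 := by
  simp [sgn]

lemma sgn_cons {N : ℕ} (S : Finset (Fin N)) (t : List (Finset (Fin N))) (y : Fin N → Bool) :
    sgn (S :: t) y = (if ∀ i ∈ S, y i = true then (-1 : ℂ) else 1) * sgn t y := by
  simp [sgn]

lemma czLayerAct_apply {N : ℕ} (gs : List (Finset (Fin N))) (ψ : QState N) (y : Fin N → Bool) :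
    czLayerAct gs ψ y = sgn gs y * ψ y := by
  induction gs with
  | nil => simp [czLayerAct, sgn]
  | cons S t ih =>
    show czGate S (czLayerAct t ψ) y = _
    rw [sgn_cons]
    by_cases h : ∀ i ∈ S, y i = true
    · simp only [czGate, if_pos h]
      rw [show czLayerAct t ψ y = sgn t y * ψ y from ih]; ring
    · simp only [czGate, if_neg h]
      rw [show czLayerAct t ψ y = sgn t y * ψ y from ih]; ring

lemma sgn_pm {N : ℕ} (gs : List (Finset (Fin N))) (y : Fin N → Bool) :
    sgn gs y = 1 ∨ sgn gs y = -1 := by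
  induction gs with
  | nil => left; simp [sgn]
  | cons S t ih =>
    rw [sgn_cons]
    rcases ih with h | h <;> rw [h] <;> by_cases hS : ∀ i ∈ S, y i = true
    · rw [if_pos hS]; right; norm_num
    · rw [if_neg hS]; left; norm_num
    · rw [if_pos hS]; left; norm_num
    · rw [if_neg hS]; right; norm_num

lemma sgn_ne_zero {N : ℕ} (gs : List (Finset (Fin N))) (y : Fin N → Bool) :
    sgn gs y ≠ 0 := by
  rcases sgn_pm gs y with h | h <;> rw [h] <;> norm_num

lemma sgn_mul_self {N : ℕ} (gs : List (Finset (Fin N))) (y : Fin N → Bool) :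
    sgn gs y * sgn gs y = 1 := by
  rcases sgn_pm gs y with h | h <;> rw [h] <;> norm_num

end ParityProof

namespace ParityProof

variable {n m : ℕ}

/-- Assemble a full assignment from target bit, input bits, ancilla bits. -/
def glue3 (n m : ℕ) (b : Bool) (u : Fin n → Bool) (w : Fin m → Bool) :
    Fin (1 + n + m) → Bool :=
  fun i => if h : i.1 = 0 then b
    else if h2 : i.1 < 1 + n then u ⟨i.1 - 1, by omega⟩
    else w ⟨i.1 - (1 + n), by omega⟩

lemma glue3_tgt (b : Bool) (u : Fin n → Bool) (w : Fin m → Bool) :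
    glue3 n m b u w (tgt n m) = b := by
  simp [glue3, tgt]

lemma glue3_inp (b : Bool) (u : Fin n → Bool) (w : Fin m → Bool) (i : Fin n) :
    glue3 n m b u w (inp n m i) = u i := by
  have h1 : (inp n m i).1 = 1 + i.1 := rfl
  rw [glue3, dif_neg (by omega), dif_pos (by have := i.2; omega)]
  congr 1
  exact Fin.ext (by simp [h1])

lemma glue3_anc (b : Bool) (u : Fin n → Bool) (w : Fin m → Bool) (j : Fin m) :
    glue3 n m b u w (anc n m j) = w j := by
  have h1 : (anc n m j).1 = 1 + n + j.1 := rfl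
  rw [glue3, dif_neg (by omega), dif_neg (by omega)]
  congr 1
  exact Fin.ext (show (anc n m j).1 - (1 + n) = j.1 by omega)

/-- Extract the non-target part of the assembled assignment. -/
def rest (n m : ℕ) (u : Fin n → Bool) (w : Fin m → Bool) : Fin (n + m) → Bool :=
  fun j => if h : j.1 < n then u ⟨j.1, h⟩ else w ⟨j.1 - n, by have := j.2; omega⟩

lemma glue3_nontgt (b : Bool) (u : Fin n → Bool) (w : Fin m → Bool) (j : Fin (n + m)) :
    glue3 n m b u w (nontgt n m j) = rest n m u w j := by
  have h1 : (nontgt n m j).1 = 1 + j.1 := rfl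
  rw [glue3, rest, dif_neg (by omega)]
  by_cases h : j.1 < n
  · rw [dif_pos (by omega), dif_pos h]
    congr 1
    exact Fin.ext (by simp [h1])
  · rw [dif_neg (by omega), dif_neg h]
    congr 1
    exact Fin.ext (show (nontgt n m j).1 - (1 + n) = j.1 - n by omega)

lemma idx_cases (i : Fin (1 + n + m)) :
    i = tgt n m ∨ (∃ i', i = inp n m i') ∨ (∃ j, i = anc n m j) := by
  rcases i with ⟨v, hv⟩
  by_cases h0 : v = 0
  · exact Or.inl (Fin.ext h0)
  by_cases h1 : v < 1 + n
  · exact Or.inr (Or.inl ⟨⟨v - 1, by omega⟩, Fin.ext (by simp [inp]; omega)⟩)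
  · exact Or.inr (Or.inr ⟨⟨v - (1 + n), by omega⟩, Fin.ext (by simp [anc]; omega)⟩)

lemma inp_ne_tgt (i : Fin n) : inp n m i ≠ tgt n m := by
  intro h
  have : (1 : ℕ) + i.1 = 0 := congrArg Fin.val h
  omega

lemma anc_ne_tgt (j : Fin m) : anc n m j ≠ tgt n m := by
  intro h
  have : 1 + n + j.1 = 0 := congrArg Fin.val h
  omega

lemma inp_injective : Function.Injective (inp n m) := by
  intro a b h
  have : (1 : ℕ) + a.1 = 1 + b.1 := congrArg Fin.val h
  exact Fin.ext (by omega)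

/-- Index equivalence: target ⊕ inputs ⊕ ancillas. -/
def eIdx (n m : ℕ) : Unit ⊕ Fin n ⊕ Fin m ≃ Fin (1 + n + m) where
  toFun := Sum.elim (fun _ => tgt n m) (Sum.elim (inp n m) (anc n m))
  invFun i := if h : i.1 = 0 then Sum.inl ()
    else if h2 : i.1 < 1 + n then Sum.inr (Sum.inl ⟨i.1 - 1, by omega⟩)
    else Sum.inr (Sum.inr ⟨i.1 - (1 + n), by have := i.2; omega⟩)
  left_inv s := by
    rcases s with _ | (i | j)
    · simp [tgt]
    · have h1 : (inp n m i).1 = 1 + i.1 := rfl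
      simp only [Sum.elim_inr, Sum.elim_inl]
      have hA : ¬ (inp n m i).1 = 0 := by omega
      have hB : (inp n m i).1 < 1 + n := by have := i.2; omega
      show @dite _ ((inp n m i).1 = 0) (instDecidableEqNat _ _) _
        (fun h => @dite _ ((inp n m i).1 < 1 + n) (Nat.decLt _ _) _ _) = _
      rw [dif_neg hA, dif_pos hB]
      congr 2
      exact Fin.ext (show (inp n m i).1 - 1 = i.1 by omega)
    · have h1 : (anc n m j).1 = 1 + n + j.1 := rfl
      simp only [Sum.elim_inr]
      have hA : ¬ (anc n m j).1 = 0 := by omega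
      have hB : ¬ (anc n m j).1 < 1 + n := by omega
      show @dite _ ((anc n m j).1 = 0) (instDecidableEqNat _ _) _
        (fun h => @dite _ ((anc n m j).1 < 1 + n) (Nat.decLt _ _) _ _) = _
      rw [dif_neg hA, dif_neg hB]
      congr 2
      exact Fin.ext (show (anc n m j).1 - (1 + n) = j.1 by omega)
  right_inv i := by
    rcases i with ⟨v, hv⟩
    dsimp only
    by_cases h0 : v = 0
    · rw [dif_pos h0]
      exact Fin.ext (by simp [tgt]; omega)
    by_cases h1 : v < 1 + n
    · rw [dif_neg h0, dif_pos h1]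
      exact Fin.ext (by simp [inp]; omega)
    · rw [dif_neg h0, dif_neg h1]
      exact Fin.ext (by simp [anc]; omega)

lemma prod_split (F : Fin (1 + n + m) → ℂ) :
    ∏ j, F j = F (tgt n m) * ((∏ i, F (inp n m i)) * ∏ j, F (anc n m j)) := by
  rw [← (eIdx n m).prod_comp F, Fintype.prod_sum_type, Fintype.prod_sum_type]
  simp [eIdx]

/-- State equivalence. -/
def eSt (n m : ℕ) : Bool × (Fin n → Bool) × (Fin m → Bool) ≃ (Fin (1 + n + m) → Bool) where
  toFun t := glue3 n m t.1 t.2.1 t.2.2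
  invFun y := (y (tgt n m), fun i => y (inp n m i), fun j => y (anc n m j))
  left_inv t := by
    obtain ⟨b, u, w⟩ := t
    refine Prod.ext ?_ (Prod.ext ?_ ?_) <;> dsimp only
    · exact glue3_tgt b u w
    · exact funext fun i => glue3_inp b u w i
    · exact funext fun j => glue3_anc b u w j
  right_inv y := by
    funext i
    rcases idx_cases i with h | ⟨i', h⟩ | ⟨j, h⟩ <;> subst h
    · exact glue3_tgt _ _ _
    · exact glue3_inp _ _ _ _
    · exact glue3_anc _ _ _ _

lemma sum_split (G : (Fin (1 + n + m) → Bool) → ℂ) :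
    ∑ y, G y = ∑ b, ∑ u, ∑ w, G (glue3 n m b u w) := by
  rw [← (eSt n m).sum_comp G, Fintype.sum_prod_type]
  refine Finset.sum_congr rfl fun b _ => ?_
  rw [Fintype.sum_prod_type]
  rfl

end ParityProof

namespace ParityProof

variable {n m : ℕ}

lemma sum_factor1 (A : Bool → ℂ) (X : (Fin n → Bool) → (Fin m → Bool) → ℂ) :
    ∑ b, ∑ u, ∑ w, A b * X u w = (∑ b, A b) * (∑ u, ∑ w, X u w) := by
  rw [Finset.sum_mul]
  refine Finset.sum_congr rfl fun b _ => ?_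
  rw [Finset.mul_sum]
  refine Finset.sum_congr rfl fun u _ => ?_
  rw [Finset.mul_sum]

lemma sum_factor3 (A : Bool → ℂ) (B : (Fin n → Bool) → ℂ) (Cc : (Fin m → Bool) → ℂ) :
    ∑ b, ∑ u, ∑ w, A b * (B u * Cc w) = (∑ b, A b) * ((∑ u, B u) * (∑ w, Cc w)) := by
  rw [sum_factor1 A (fun u w => B u * Cc w)]
  congr 1
  rw [Finset.sum_mul]
  refine Finset.sum_congr rfl fun u _ => ?_
  rw [Finset.mul_sum]

lemma layer_inState (L0 : Fin (1 + n + m) → Matrix (Fin 2) (Fin 2) ℂ)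
    (x : Fin n → Bool) (α : QState m) (b : Bool) (u : Fin n → Bool) (w : Fin m → Bool) :
    layerAct L0 (inState n m false x α) (glue3 n m b u w)
      = L0 (tgt n m) (bitIdx b) (bitIdx false) *
        ((∏ i, L0 (inp n m i) (bitIdx (u i)) (bitIdx (x i))) *
          layerAct (fun j => L0 (anc n m j)) α w) := by
  simp only [layerAct]
  rw [sum_split]
  have step : ∀ (b' : Bool) (u' : Fin n → Bool) (w' : Fin m → Bool),
      (∏ j, L0 j (bitIdx (glue3 n m b u w j)) (bitIdx (glue3 n m b' u' w' j))) *
        (inState n m false x α (glue3 n m b' u' w'))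
      = (L0 (tgt n m) (bitIdx b) (bitIdx b') * if b' = false then 1 else 0) *
        (((∏ i, L0 (inp n m i) (bitIdx (u i)) (bitIdx (u' i))) * if u' = x then 1 else 0) *
          ((∏ j, L0 (anc n m j) (bitIdx (w j)) (bitIdx (w' j))) * α w')) := by
    intro b' u' w'
    rw [prod_split (fun j => L0 j (bitIdx (glue3 n m b u w j)) (bitIdx (glue3 n m b' u' w' j)))]
    show _ * ((if _ then (1:ℂ) else 0) * α (fun j => glue3 n m b' u' w' (anc n m j))) = _
    have ha : (fun j => glue3 n m b' u' w' (anc n m j)) = w' :=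
      funext fun j => glue3_anc _ _ _ _
    rw [ha]
    simp only [glue3_tgt, glue3_inp, glue3_anc]
    by_cases hb : b' = false
    · by_cases hu : u' = x
      · subst hu
        rw [if_pos ⟨hb, fun i => rfl⟩, if_pos hb, if_pos rfl]
        ring
      · rw [if_neg (fun hc => hu (funext hc.2)), if_neg hu]
        ring
    · rw [if_neg (fun hc => hb hc.1), if_neg hb]
      ring
  rw [Finset.sum_congr rfl fun b' _ => Finset.sum_congr rfl fun u' _ =>
    Finset.sum_congr rfl fun w' _ => step b' u' w']
  rw [sum_factor3]
  have e1 : (∑ b', L0 (tgt n m) (bitIdx b) (bitIdx b') * if b' = false then (1:ℂ) else 0)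
      = L0 (tgt n m) (bitIdx b) (bitIdx false) := by
    simp [mul_ite, mul_one, mul_zero, Finset.sum_ite_eq']
  have e2 : (∑ u' : Fin n → Bool,
        (∏ i, L0 (inp n m i) (bitIdx (u i)) (bitIdx (u' i))) * if u' = x then (1:ℂ) else 0)
      = ∏ i, L0 (inp n m i) (bitIdx (u i)) (bitIdx (x i)) := by
    simp [mul_ite, mul_one, mul_zero, Finset.sum_ite_eq']
  rw [e1, e2]

lemma layer_final (M : Fin (1 + n + m) → Matrix (Fin 2) (Fin 2) ℂ) (p : Bool)
    (φ : QState (n + m)) :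
    ∃ h : (Fin n → Bool) → (Fin m → Bool) → ℂ, ∀ (b : Bool) u w,
      layerAct M (fun y => (if y (tgt n m) = p then (1 : ℂ) else 0) *
          φ (fun j => y (nontgt n m j))) (glue3 n m b u w)
        = M (tgt n m) (bitIdx b) (bitIdx p) * h u w := by
  refine ⟨fun u w => ∑ u', ∑ w',
    (∏ i, M (inp n m i) (bitIdx (u i)) (bitIdx (u' i))) *
      ((∏ j, M (anc n m j) (bitIdx (w j)) (bitIdx (w' j))) * φ (rest n m u' w')),
    fun b u w => ?_⟩
  simp only [layerAct]
  rw [sum_split]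
  have step : ∀ (b' : Bool) (u' : Fin n → Bool) (w' : Fin m → Bool),
      (∏ j, M j (bitIdx (glue3 n m b u w j)) (bitIdx (glue3 n m b' u' w' j))) *
        ((if glue3 n m b' u' w' (tgt n m) = p then (1 : ℂ) else 0) *
          φ (fun j => glue3 n m b' u' w' (nontgt n m j)))
      = (M (tgt n m) (bitIdx b) (bitIdx b') * if b' = p then 1 else 0) *
        ((∏ i, M (inp n m i) (bitIdx (u i)) (bitIdx (u' i))) *
          ((∏ j, M (anc n m j) (bitIdx (w j)) (bitIdx (w' j))) * φ (rest n m u' w'))) := by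
    intro b' u' w'
    rw [prod_split (fun j => M j (bitIdx (glue3 n m b u w j)) (bitIdx (glue3 n m b' u' w' j)))]
    have hr : (fun j => glue3 n m b' u' w' (nontgt n m j)) = rest n m u' w' :=
      funext fun j => glue3_nontgt _ _ _ _
    rw [hr]
    simp only [glue3_tgt, glue3_inp, glue3_anc]
    by_cases hb : b' = p
    · rw [if_pos hb]; ring
    · rw [if_neg hb]; ring
  rw [Finset.sum_congr rfl fun b' _ => Finset.sum_congr rfl fun u' _ =>
    Finset.sum_congr rfl fun w' _ => step b' u' w']
  rw [sum_factor1]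
  have e1 : (∑ b', M (tgt n m) (bitIdx b) (bitIdx b') * if b' = p then (1:ℂ) else 0)
      = M (tgt n m) (bitIdx b) (bitIdx p) := by
    simp [mul_ite, mul_one, mul_zero, Finset.sum_ite_eq']
  rw [e1]

end ParityProof

namespace ParityProof

variable {n m : ℕ}

/-- All non-target qubits of `S` are set to one under `(u, w)`. -/
def Ones (n m : ℕ) (S : Finset (Fin (1 + n + m))) (u : Fin n → Bool) (w : Fin m → Bool) :
    Prop :=
  ∀ i ∈ S, i ≠ tgt n m → glue3 n m true u w i = true

lemma glue3_ne_tgt (b b' : Bool) (u : Fin n → Bool) (w : Fin m → Bool)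
    {i : Fin (1 + n + m)} (hi : i ≠ tgt n m) :
    glue3 n m b u w i = glue3 n m b' u w i := by
  rcases idx_cases i with h | ⟨i', h⟩ | ⟨j, h⟩
  · exact absurd h hi
  · subst h; rw [glue3_inp, glue3_inp]
  · subst h; rw [glue3_anc, glue3_anc]

lemma allOnes_glue_true (S : Finset (Fin (1 + n + m))) (u : Fin n → Bool)
    (w : Fin m → Bool) :
    (∀ i ∈ S, glue3 n m true u w i = true) ↔ Ones n m S u w := by
  constructor
  · intro h i hi _; exact h i hi
  · intro h i hi
    by_cases ht : i = tgt n m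
    · subst ht; exact glue3_tgt _ _ _
    · exact h i hi ht

lemma allOnes_glue_false (S : Finset (Fin (1 + n + m))) (u : Fin n → Bool)
    (w : Fin m → Bool) :
    (∀ i ∈ S, glue3 n m false u w i = true) ↔ (Ones n m S u w ∧ tgt n m ∉ S) := by
  constructor
  · intro h
    refine ⟨fun i hi hit => ?_, fun hts => ?_⟩
    · rw [← glue3_ne_tgt false true u w hit]
      exact h i hi
    · have h2 := h _ hts
      rw [glue3_tgt] at h2
      exact Bool.false_ne_true h2
  · rintro ⟨h1, h2⟩ i hi
    have hit : i ≠ tgt n m := fun e => h2 (e ▸ hi)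
    rw [glue3_ne_tgt false true u w hit]
    exact h1 i hi hit

open Classical in
lemma D_formula (gs : List (Finset (Fin (1 + n + m))))
    (hdisj : gs.Pairwise (fun S T => Disjoint S T)) (u : Fin n → Bool) (w : Fin m → Bool) :
    sgn gs (glue3 n m true u w) * sgn gs (glue3 n m false u w)
      = if ∃ S ∈ gs, tgt n m ∈ S ∧ Ones n m S u w then -1 else 1 := by
  induction gs with
  | nil => simp [sgn_nil]
  | cons S t ih =>
    have hd := (List.pairwise_cons.mp hdisj).1
    have hrec := ih (List.pairwise_cons.mp hdisj).2
    rw [sgn_cons, sgn_cons]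
    have e1 : (if ∀ i ∈ S, glue3 n m true u w i = true then (-1 : ℂ) else 1)
        = if Ones n m S u w then -1 else 1 := by
      by_cases h : Ones n m S u w
      · rw [if_pos ((allOnes_glue_true S u w).mpr h), if_pos h]
      · rw [if_neg (fun hc => h ((allOnes_glue_true S u w).mp hc)), if_neg h]
    have e2 : (if ∀ i ∈ S, glue3 n m false u w i = true then (-1 : ℂ) else 1)
        = if Ones n m S u w ∧ tgt n m ∉ S then -1 else 1 := by
      by_cases h : Ones n m S u w ∧ tgt n m ∉ S
      · rw [if_pos ((allOnes_glue_false S u w).mpr h), if_pos h]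
      · rw [if_neg (fun hc => h ((allOnes_glue_false S u w).mp hc)), if_neg h]
    rw [e1, e2, mul_mul_mul_comm, hrec]
    by_cases hS : tgt n m ∈ S ∧ Ones n m S u w
    · have hnot : ¬∃ S' ∈ t, tgt n m ∈ S' ∧ Ones n m S' u w := by
        rintro ⟨S', hS't, hS'tgt, -⟩
        exact Finset.disjoint_left.mp (hd S' hS't) hS.1 hS'tgt
      rw [if_pos hS.2, if_neg (fun hc => hc.2 hS.1), if_neg hnot,
        if_pos ⟨S, List.mem_cons_self, hS.1, hS.2⟩]
      norm_num
    · have eqex : (∃ S' ∈ S :: t, tgt n m ∈ S' ∧ Ones n m S' u w)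
          ↔ (∃ S' ∈ t, tgt n m ∈ S' ∧ Ones n m S' u w) := by
        constructor
        · rintro ⟨S', hmem, h1, h2⟩
          rcases List.mem_cons.mp hmem with rfl | hmem'
          · exact absurd ⟨h1, h2⟩ hS
          · exact ⟨S', hmem', h1, h2⟩
        · rintro ⟨S', hmem, h1, h2⟩
          exact ⟨S', List.mem_cons_of_mem S hmem, h1, h2⟩
      rw [if_congr eqex rfl rfl]
      by_cases hO : Ones n m S u w
      · rw [if_pos hO, if_pos ⟨hO, fun ht => hS ⟨ht, hO⟩⟩]; ring
      · rw [if_neg hO, if_neg (fun hc => hO hc.1)]; ring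

lemma tgt_unique (gs : List (Finset (Fin (1 + n + m))))
    (hdisj : gs.Pairwise (fun S T => Disjoint S T))
    {S S' : Finset (Fin (1 + n + m))} (hS : S ∈ gs) (hS' : S' ∈ gs)
    (h1 : tgt n m ∈ S) (h2 : tgt n m ∈ S') : S = S' := by
  by_contra hne
  have hsymm : Symmetric (fun S T : Finset (Fin (1 + n + m)) => Disjoint S T) :=
    fun _ _ h => h.symm
  haveI : Std.Symm (fun S T : Finset (Fin (1 + n + m)) => Disjoint S T) := ⟨fun a b h => hsymm h⟩
  exact Finset.disjoint_left.mp (hdisj.forall hS hS' hne) h1 h2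

lemma parityB_const_false : parityB (fun _ : Fin n => false) = false := by
  simp [parityB]

lemma parityB_update (x : Fin n → Bool) (k : Fin n) :
    parityB (Function.update x k (!x k)) = !parityB x := by
  unfold parityB
  rw [← Finset.add_sum_erase _
      (fun i => if Function.update x k (!x k) i = true then (1 : ℕ) else 0) (Finset.mem_univ k),
    ← Finset.add_sum_erase _ (fun i => if x i = true then (1 : ℕ) else 0) (Finset.mem_univ k)]
  have herase : (∑ i ∈ Finset.univ.erase k,
        if Function.update x k (!x k) i = true then (1 : ℕ) else 0)
      = ∑ i ∈ Finset.univ.erase k, if x i = true then (1 : ℕ) else 0 :=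
    Finset.sum_congr rfl fun i hi => by
      rw [Function.update_of_ne (Finset.ne_of_mem_erase hi)]
  rw [herase, Function.update_self]
  cases hk : x k
  · rw [Bool.not_false, if_pos rfl, if_neg Bool.false_ne_true, ← decide_not,
      decide_eq_decide]
    omega
  · rw [Bool.not_true, if_neg Bool.false_ne_true, if_pos rfl, ← decide_not,
      decide_eq_decide]
    omega

end ParityProof

namespace ParityProof

lemma endgame {n m : ℕ} (hn : 2 ≤ n)
    (gs : List (Finset (Fin (1 + n + m))))
    (hdisj : gs.Pairwise (fun S T => Disjoint S T))
    (A : Bool → ℂ) (Bent : Fin n → Bool → Bool → ℂ) (Γ : QState m)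
    (W : Bool → Bool → ℂ)
    (hAcol : A false ≠ 0 ∨ A true ≠ 0)
    (hBcol : ∀ i c, Bent i c false ≠ 0 ∨ Bent i c true ≠ 0)
    (hBorth : ∀ i, star (Bent i false false) * Bent i true false
        + star (Bent i false true) * Bent i true true = 0)
    (hWcol : ∀ p, W p false ≠ 0 ∨ W p true ≠ 0)
    (hWorth : star (W false false) * W true false + star (W false true) * W true true = 0)
    (hΓ : ∃ w, Γ w ≠ 0)
    (master : ∀ x : Fin n → Bool, ∃ h : (Fin n → Bool) → (Fin m → Bool) → ℂ,
      ∀ b u w, sgn gs (glue3 n m b u w) *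
          (A b * ((∏ i, Bent i (x i) (u i)) * Γ w))
        = W (parityB x) b * h u w) : False := by
  classical
  have hBex : ∀ i c, ∃ b, Bent i c b ≠ 0 :=
    fun i c => (hBcol i c).elim (fun h => ⟨false, h⟩) (fun h => ⟨true, h⟩)
  choose uSel huSel using hBex
  obtain ⟨wΓ, hwΓ⟩ := hΓ
  -- the cross identity
  have cross : ∀ (x u : Fin n → Bool) (w : Fin m → Bool),
      (∀ i, Bent i (x i) (u i) ≠ 0) → Γ w ≠ 0 →
      sgn gs (glue3 n m false u w) * A false * W (parityB x) true
        = sgn gs (glue3 n m true u w) * A true * W (parityB x) false := by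
    intro x u w hu hw
    obtain ⟨h, hh⟩ := master x
    have eqF := hh false u w
    have eqT := hh true u w
    have hG : (∏ i, Bent i (x i) (u i)) * Γ w ≠ 0 :=
      mul_ne_zero (Finset.prod_ne_zero_iff.mpr fun i _ => hu i) hw
    refine mul_right_cancel₀ hG ?_
    linear_combination W (parityB x) true * eqF - W (parityB x) false * eqT
  -- parity representatives
  have h0n : 0 < n := by omega
  have h1n : 1 < n := by omega
  set i0 : Fin n := ⟨0, h0n⟩ with hi0
  set i1 : Fin n := ⟨1, h1n⟩ with hi1
  have hne : i0 ≠ i1 := by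
    intro h
    have := congrArg Fin.val h
    simp [hi0, hi1] at this
  set xP : Bool → Fin n → Bool := fun p => Function.update (fun _ => false) i1 p with hxPdef
  have hxP : ∀ p, parityB (xP p) = p := by
    intro p
    cases p
    · show parityB (Function.update (fun _ => false) i1 false) = false
      rw [show Function.update (fun _ : Fin n => false) i1 false = (fun _ : Fin n => false)
        from Function.update_eq_self i1 _]
      exact parityB_const_false
    · show parityB (Function.update (fun _ => false) i1 true) = true
      have e : Function.update (fun _ : Fin n => false) i1 true
          = Function.update (fun _ : Fin n => false) i1 (!(fun _ : Fin n => false) i1) := rfl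
      rw [e, parityB_update, parityB_const_false]
      rfl
  have hxP0 : ∀ p, xP p i0 = false := by
    intro p
    show Function.update (fun _ : Fin n => false) i1 p i0 = false
    rw [Function.update_of_ne hne]
  -- degenerate cases for A
  by_cases hAF : A false = 0
  · have hAT : A true ≠ 0 := hAcol.resolve_left (not_not_intro hAF)
    have hWF0 : ∀ p, W p false = 0 := by
      intro p
      have hc := cross (xP p) (fun i => uSel i (xP p i)) wΓ (fun i => huSel i _) hwΓ
      rw [hxP p, hAF, mul_zero, zero_mul] at hc
      rcases mul_eq_zero.mp hc.symm with h6 | h6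
      · rcases mul_eq_zero.mp h6 with h7 | h7
        · exact absurd h7 (sgn_ne_zero _ _)
        · exact absurd h7 hAT
      · exact h6
    have h8 := hWorth
    rw [hWF0 false, hWF0 true] at h8
    simp only [star_zero, zero_mul, mul_zero, zero_add] at h8
    rcases mul_eq_zero.mp h8 with h9 | h9
    · rcases hWcol false with h | h
      · exact h (hWF0 false)
      · exact h (by simpa using h9)
    · rcases hWcol true with h | h
      · exact h (hWF0 true)
      · exact h h9
  by_cases hAT : A true = 0
  · have hWT0 : ∀ p, W p true = 0 := by
      intro p
      have hc := cross (xP p) (fun i => uSel i (xP p i)) wΓ (fun i => huSel i _) hwΓ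
      rw [hxP p, hAT, mul_zero, zero_mul] at hc
      rcases mul_eq_zero.mp hc with h6 | h6
      · rcases mul_eq_zero.mp h6 with h7 | h7
        · exact absurd h7 (sgn_ne_zero _ _)
        · exact absurd h7 hAF
      · exact h6
    have h8 := hWorth
    rw [hWT0 false, hWT0 true] at h8
    simp only [star_zero, zero_mul, mul_zero, add_zero] at h8
    rcases mul_eq_zero.mp h8 with h9 | h9
    · rcases hWcol false with h | h
      · exact h (by simpa using h9)
      · exact h (hWT0 false)
    · rcases hWcol true with h | h
      · exact h h9
      · exact h (hWT0 true)
  -- main case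
  have hWF : ∀ p, W p false ≠ 0 := by
    intro p h0
    have hc := cross (xP p) (fun i => uSel i (xP p i)) wΓ (fun i => huSel i _) hwΓ
    rw [hxP p, h0, mul_zero] at hc
    have hWT : W p true = 0 := by
      rcases mul_eq_zero.mp hc with h6 | h6
      · exact absurd h6 (mul_ne_zero (sgn_ne_zero _ _) hAF)
      · exact h6
    rcases hWcol p with h | h
    · exact h h0
    · exact h hWT
  have hkey : ∀ (x u : Fin n → Bool) (w : Fin m → Bool),
      (∀ i, Bent i (x i) (u i) ≠ 0) → Γ w ≠ 0 →
      (sgn gs (glue3 n m true u w) * sgn gs (glue3 n m false u w))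
          * (A true * W (parityB x) false)
        = A false * W (parityB x) true := by
    intro x u w hu hw
    have hc := cross x u w hu hw
    have hsF := sgn_mul_self gs (glue3 n m false u w)
    linear_combination (-(sgn gs (glue3 n m false u w))) * hc
      + (A false * W (parityB x) true) * hsF
  have hμex : ∃ μ : Bool → ℂ, ∀ (x u : Fin n → Bool) (w : Fin m → Bool),
      (∀ i, Bent i (x i) (u i) ≠ 0) → Γ w ≠ 0 →
      sgn gs (glue3 n m true u w) * sgn gs (glue3 n m false u w) = μ (parityB x) := by
    refine ⟨fun p => (A false * W p true) / (A true * W p false), fun x u w hu hw => ?_⟩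
    rw [eq_div_iff (mul_ne_zero hAT (hWF _))]
    exact hkey x u w hu hw
  obtain ⟨μ, hμ⟩ := hμex
  have hrel : ∀ p, μ p * (A true * W p false) = A false * W p true := by
    intro p
    have h1 := hkey (xP p) (fun i => uSel i (xP p i)) wΓ (fun i => huSel i _) hwΓ
    have h2 := hμ (xP p) (fun i => uSel i (xP p i)) wΓ (fun i => huSel i _) hwΓ
    rw [hxP p] at h1 h2
    rw [← h2]
    exact h1
  have hμpm : ∀ p, μ p = 1 ∨ μ p = -1 := by
    intro p
    have h1 := hμ (xP p) (fun i => uSel i (xP p i)) wΓ (fun i => huSel i _) hwΓ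
    rw [hxP p] at h1
    rw [← h1, D_formula gs hdisj]
    split_ifs
    · exact Or.inr rfl
    · exact Or.inl rfl
  have hμne : μ false ≠ μ true := by
    intro hEq
    set c : ℂ := μ false * A true / A false with hc
    have hWT : ∀ p, W p true = c * W p false := by
      intro p
      have h1 := hrel p
      have h2 : μ p = μ false := by
        cases p
        · rfl
        · exact hEq.symm
      rw [h2] at h1
      rw [hc, div_mul_eq_mul_div, eq_div_iff hAF]
      linear_combination -h1
    have h8 := hWorth
    rw [hWT false, hWT true] at h8
    simp only [star_mul] at h8
    have h9 : (1 + star c * c) * (star (W false false) * W true false) = 0 := by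
      linear_combination h8
    have hcoef : (1 : ℂ) + star c * c ≠ 0 := by
      rw [Complex.star_def, mul_comm, Complex.mul_conj]
      intro hzero
      have hre := congrArg Complex.re hzero
      simp at hre
      nlinarith [Complex.normSq_nonneg c, hre]
    rcases mul_eq_zero.mp h9 with h10 | h10
    · exact hcoef h10
    · rcases mul_eq_zero.mp h10 with h11 | h11
      · exact hWF false (by simpa using h11)
      · exact hWF true h11
  obtain ⟨q, hq, hq'⟩ : ∃ q, μ q = -1 ∧ μ (!q) = 1 := by
    rcases hμpm false with h | h <;> rcases hμpm true with h' | h'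
    · exact absurd (h.trans h'.symm) hμne
    · exact ⟨true, h', by simpa using h⟩
    · exact ⟨false, h, by simpa using h'⟩
    · exact absurd (h.trans h'.symm) hμne
  have hNeg : ∀ (x u : Fin n → Bool) (w : Fin m → Bool), parityB x = q →
      (∀ i, Bent i (x i) (u i) ≠ 0) → Γ w ≠ 0 →
      ∃ S ∈ gs, tgt n m ∈ S ∧ Ones n m S u w := by
    intro x u w hp hu hw
    have h1 := hμ x u w hu hw
    rw [hp, hq, D_formula gs hdisj] at h1
    by_contra hno
    rw [if_neg hno] at h1
    norm_num at h1
  have hPos : ∀ (x u : Fin n → Bool) (w : Fin m → Bool), parityB x = !q →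
      (∀ i, Bent i (x i) (u i) ≠ 0) → Γ w ≠ 0 →
      ¬ (∃ S ∈ gs, tgt n m ∈ S ∧ Ones n m S u w) := by
    intro x u w hp hu hw hyes
    have h1 := hμ x u w hu hw
    rw [hp, hq', D_formula gs hdisj, if_pos hyes] at h1
    norm_num at h1
  obtain ⟨Sstar, hSmem, hStgt, -⟩ :=
    hNeg (xP q) (fun i => uSel i (xP q i)) wΓ (hxP q) (fun i => huSel i _) hwΓ
  have hOnesAll : ∀ (x u : Fin n → Bool) (w : Fin m → Bool), parityB x = q →
      (∀ i, Bent i (x i) (u i) ≠ 0) → Γ w ≠ 0 → Ones n m Sstar u w := by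
    intro x u w hp hu hw
    obtain ⟨S, hS1, hS2, hS3⟩ := hNeg x u w hp hu hw
    rwa [tgt_unique gs hdisj hS1 hSmem hS2 hStgt] at hS3
  by_cases hin : inp n m i0 ∈ Sstar
  · -- the gate forces input-0 wires to one
    have hforce : ∀ x : Fin n → Bool, parityB x = q → ∀ b, Bent i0 (x i0) b ≠ 0 → b = true := by
      intro x hp b hb
      have hsupp : ∀ i, Bent i (x i) (Function.update (fun i => uSel i (x i)) i0 b i) ≠ 0 := by
        intro i
        by_cases hii : i = i0
        · subst hii
          rw [Function.update_self]
          exact hb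
        · rw [Function.update_of_ne hii]
          exact huSel i (x i)
      have hone := hOnesAll x (Function.update (fun i => uSel i (x i)) i0 b) wΓ hp hsupp hwΓ
      have h2 := hone (inp n m i0) hin (inp_ne_tgt i0)
      rwa [glue3_inp, Function.update_self] at h2
    have hf0 : Bent i0 false false = 0 := by
      by_contra hbz
      have h2 := hforce (xP q) (hxP q) false (by rw [hxP0 q]; exact hbz)
      exact Bool.false_ne_true h2
    -- a parity-q input with first bit one
    have hx2 : parityB (Function.update (xP q) i0 true) = !q := by
      have e : Function.update (xP q) i0 true = Function.update (xP q) i0 (!(xP q i0)) := by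
        rw [hxP0 q]
        rfl
      rw [e, parityB_update, hxP q]
    have hx3 : parityB (Function.update (Function.update (xP q) i0 true) i1
        (!(Function.update (xP q) i0 true) i1)) = q := by
      rw [parityB_update, hx2, Bool.not_not]
    have hx3i0 : (Function.update (Function.update (xP q) i0 true) i1
        (!(Function.update (xP q) i0 true) i1)) i0 = true := by
      rw [Function.update_of_ne hne, Function.update_self]
    have hf1 : Bent i0 true false = 0 := by
      by_contra hbz
      have h2 := hforce _ hx3 false (by rw [hx3i0]; exact hbz)
      exact Bool.false_ne_true h2
    have h8 := hBorth i0
    rw [hf0, hf1] at h8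
    simp only [star_zero, zero_mul, mul_zero, zero_add] at h8
    rcases mul_eq_zero.mp h8 with h9 | h9
    · rcases hBcol i0 false with h | h
      · exact h hf0
      · exact h (by simpa using h9)
    · rcases hBcol i0 true with h | h
      · exact h hf1
      · exact h h9
  · -- the gate does not touch input 0: flip it
    have hone := hOnesAll (xP q) (fun i => uSel i (xP q i)) wΓ (hxP q) (fun i => huSel i _) hwΓ
    have hx2 : parityB (Function.update (xP q) i0 true) = !q := by
      have e : Function.update (xP q) i0 true = Function.update (xP q) i0 (!(xP q i0)) := by
        rw [hxP0 q]
        rfl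
      rw [e, parityB_update, hxP q]
    have hsupp2 : ∀ i, Bent i (Function.update (xP q) i0 true i)
        (Function.update (fun i => uSel i (xP q i)) i0 (uSel i0 true) i) ≠ 0 := by
      intro i
      by_cases hii : i = i0
      · subst hii
        rw [Function.update_self, Function.update_self]
        exact huSel i0 true
      · rw [Function.update_of_ne hii, Function.update_of_ne hii]
        exact huSel i (xP q i)
    refine hPos (Function.update (xP q) i0 true)
      (Function.update (fun i => uSel i (xP q i)) i0 (uSel i0 true)) wΓ hx2 hsupp2 hwΓ
      ⟨Sstar, hSmem, hStgt, ?_⟩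
    intro i hiS hit
    have h1 := hone i hiS hit
    rcases idx_cases i with he | ⟨i', he⟩ | ⟨j, he⟩
    · exact absurd he hit
    · subst he
      rw [glue3_inp] at h1 ⊢
      have hii' : i' ≠ i0 := fun e => hin (e ▸ hiS)
      rw [Function.update_of_ne hii']
      exact h1
    · subst he
      rw [glue3_anc] at h1 ⊢
      exact h1

end ParityProof

namespace ParityProof

lemma colOr {P : Matrix (Fin 2) (Fin 2) ℂ} (hP : P ∈ Matrix.unitaryGroup (Fin 2) ℂ)
    (c : Bool) : P (bitIdx false) (bitIdx c) ≠ 0 ∨ P (bitIdx true) (bitIdx c) ≠ 0 := by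
  obtain ⟨r, hr⟩ := unitary_col_ne hP (bitIdx c)
  fin_cases r
  · exact Or.inl hr
  · exact Or.inr hr

end ParityProof

open ParityProof

theorem no_depth_one_weakly_computes_parity (n m : ℕ) (hn : 2 ≤ n) :
    ¬ ∃ C : QAC (1 + n + m) 1, WeaklyComputes n m C := by
  classical
  rintro ⟨C, α, hα, hcomp⟩
  have act_eq : ∀ ψ : QState (1 + n + m),
      C.act ψ = layerAct (C.L 1) (czLayerAct (C.Z 0) (layerAct (C.L 0) ψ)) := fun ψ => rfl
  have hα0 : ∃ v, α v ≠ 0 := by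
    by_contra h
    push_neg at h
    unfold UnitVec at hα
    simp [h] at hα
  have hΓ : ∃ w, (layerAct (fun j => C.L 0 (anc n m j)) α) w ≠ 0 :=
    layerAct_ne_zero _ (fun j => C.hL 0 _) α hα0
  have master : ∀ x : Fin n → Bool, ∃ h : (Fin n → Bool) → (Fin m → Bool) → ℂ,
      ∀ b u w, sgn (C.Z 0) (glue3 n m b u w) *
          ((C.L 0 (tgt n m) (bitIdx b) (bitIdx false)) *
            ((∏ i, C.L 0 (inp n m i) (bitIdx (u i)) (bitIdx (x i))) *
              layerAct (fun j => C.L 0 (anc n m j)) α w))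
        = (star (C.L 1 (tgt n m)) (bitIdx b) (bitIdx (parityB x))) * h u w := by
    intro x
    obtain ⟨φ, hφunit, hφ⟩ := hcomp x
    have hfinal : layerAct (C.L 1) (czLayerAct (C.Z 0) (layerAct (C.L 0) (inState n m false x α)))
        = fun y => (if y (tgt n m) = parityB x then (1 : ℂ) else 0) *
            φ (fun j => y (nontgt n m j)) := by
      funext y
      rw [← act_eq]
      exact hφ y
    have hinv : czLayerAct (C.Z 0) (layerAct (C.L 0) (inState n m false x α))
        = layerAct (fun j => star (C.L 1 j))
            (fun y => (if y (tgt n m) = parityB x then (1 : ℂ) else 0) *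
              φ (fun j => y (nontgt n m j))) := by
      rw [← hfinal, layerAct_star (C.L 1) (fun j => C.hL 1 j)]
    obtain ⟨h, hh⟩ := layer_final (fun j => star (C.L 1 j)) (parityB x) φ
    refine ⟨h, fun b u w => ?_⟩
    have e1 := congrFun hinv (glue3 n m b u w)
    rw [czLayerAct_apply, layer_inState, hh b u w] at e1
    exact e1
  exact endgame hn (C.Z 0) (C.hZ 0)
    (fun b => C.L 0 (tgt n m) (bitIdx b) (bitIdx false))
    (fun i c b => C.L 0 (inp n m i) (bitIdx b) (bitIdx c))
    (layerAct (fun j => C.L 0 (anc n m j)) α)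
    (fun p b => star (C.L 1 (tgt n m)) (bitIdx b) (bitIdx p))
    (colOr (C.hL 0 (tgt n m)) false)
    (fun i c => colOr (C.hL 0 (inp n m i)) c)
    (fun i => unitary_col_orth (C.hL 0 (inp n m i)))
    (fun p => colOr (Unitary.star_mem (C.hL 1 (tgt n m))) p)
    (unitary_col_orth (Unitary.star_mem (C.hL 1 (tgt n m))))
    hΓ master
end

section
/- Let n ≥ 1, m ≥ 0, d ≥ 2, and let C = L_{d+1} ∘ Z_d ∘ ⋯ ∘ Z_1 ∘ L_1 be a depth-d QAC circuit on 1+n+m qubits that α-computes ⊕_n for some unit ancilla state α. Suppose that either (i) the 2×2 unitary applied to qubit 0 in the final single-qubit layer L_{d+1} is semiclassical, or (ii) no CZ gate in layer Z_d with at least two qubits contains qubit 0. Then there exists a depth-(d−1) QAC circuit on the same register that α-computes ⊕_n. -/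
open scoped BigOperators

/-!
Write `C = L ∘ Z ∘ σ` with `σ = C.dropLast` of depth `d - 1`. As `L` acts qubitwise, undoing it
on the output `|⊕x⟩ ⊗ φₓ` gives `Z (σ |0, x, α⟩) = U⁻¹|⊕x⟩ ⊗ hₓ`, where `U` is the last gate on
the target. The CZ layer `Z` is diagonal and an involution. If `U` is semiclassical, `U⁻¹|⊕x⟩`
is a basis vector up to a scalar, so `Z` only changes `hₓ` by a phase; if no gate of `Z` with two
or more qubits contains the target, `Z` splits into a diagonal unitary `D` on the target and a
phase on the rest. Either way `σ |0, x, α⟩ = D U⁻¹|⊕x⟩ ⊗ h'ₓ` with `D` independent of `x`, so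
merging `U D⁻¹` on the target into the last layer of `σ` gives a depth-`(d - 1)` circuit computing
parity.
-/

open Matrix

lemma sum_bitIdx (f : Fin 2 → ℂ) : ∑ b : Bool, f (bitIdx b) = ∑ k, f k := by
  simp [Fin.sum_univ_two, bitIdx, add_comm]

lemma bitIdx_injective : Function.Injective bitIdx := by
  intro a b; cases a <;> cases b <;> simp [bitIdx]

def layerMatrix {N : ℕ} (U : Fin N → Matrix (Fin 2) (Fin 2) ℂ) :
    Matrix (Fin N → Bool) (Fin N → Bool) ℂ :=
  Matrix.of fun x y => ∏ j, U j (bitIdx (x j)) (bitIdx (y j))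

section LayerMatrix

variable {N : ℕ}

lemma layerAct_eq_mulVec (U : Fin N → Matrix (Fin 2) (Fin 2) ℂ) (ψ : QState N) :
    layerAct U ψ = layerMatrix U *ᵥ ψ := rfl

lemma layerMatrix_mul (A B : Fin N → Matrix (Fin 2) (Fin 2) ℂ) :
    layerMatrix (A * B) = layerMatrix A * layerMatrix B := by
  ext x y
  simp only [layerMatrix, of_apply, mul_apply, Pi.mul_apply, ← sum_bitIdx, Finset.prod_univ_sum,
    Fintype.piFinset_univ, ← Finset.prod_mul_distrib]

lemma layerMatrix_one : layerMatrix (1 : Fin N → Matrix (Fin 2) (Fin 2) ℂ) = 1 := by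
  ext x y
  simp only [layerMatrix, of_apply, Pi.one_apply, one_apply, bitIdx_injective.eq_iff]
  by_cases hxy : x = y
  · simp [hxy]
  · obtain ⟨j, hj⟩ := Function.ne_iff.mp hxy
    simp only [hxy, if_false]
    exact Finset.prod_eq_zero (Finset.mem_univ j) (if_neg hj)

lemma layerMatrix_star (U : Fin N → Matrix (Fin 2) (Fin 2) ℂ) :
    layerMatrix (star U) = star (layerMatrix U) := by
  ext x y
  simp [layerMatrix, star_apply]

lemma layerMatrix_mem_unitaryGroup {U : Fin N → Matrix (Fin 2) (Fin 2) ℂ}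
    (hU : ∀ j, U j ∈ unitaryGroup (Fin 2) ℂ) : layerMatrix U ∈ unitaryGroup (Fin N → Bool) ℂ := by
  have hstar : star U * U = 1 := funext fun j => Unitary.star_mul_self_of_mem (hU j)
  rw [mem_unitaryGroup_iff', ← layerMatrix_star, ← layerMatrix_mul, hstar, layerMatrix_one]

end LayerMatrix

lemma sum_norm_sq_mulVec_of_mem_unitaryGroup {ι : Type*} [Fintype ι] [DecidableEq ι]
    {M : Matrix ι ι ℂ} (hM : M ∈ unitaryGroup ι ℂ) (ψ : ι → ℂ) :
    ∑ x, ‖(M *ᵥ ψ) x‖ ^ 2 = ∑ x, ‖ψ x‖ ^ 2 := by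
  have hdot : star (M *ᵥ ψ) ⬝ᵥ (M *ᵥ ψ) = star ψ ⬝ᵥ ψ := by
    rw [star_mulVec, dotProduct_mulVec, vecMul_vecMul, ← star_eq_conjTranspose,
      Unitary.star_mul_self_of_mem hM, vecMul_one]
  have hnorm : ∀ v : ι → ℂ, ((∑ x, ‖v x‖ ^ 2 : ℝ) : ℂ) = star v ⬝ᵥ v := fun v => by
    simp [dotProduct, Complex.conj_mul']
  exact_mod_cast (hnorm _).trans (hdot.trans (hnorm ψ).symm)

section TargetSplit

variable {n m : ℕ}

def restBits (n m : ℕ) (y : Fin (1 + n + m) → Bool) : Fin (n + m) → Bool :=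
  fun j => y (nontgt n m j)

def mergeBits (n m : ℕ) (b : Bool) (z : Fin (n + m) → Bool) : Fin (1 + n + m) → Bool :=
  fun i => if h : (i : ℕ) = 0 then b else z ⟨(i : ℕ) - 1, by omega⟩

lemma nontgt_ne_tgt (j : Fin (n + m)) : nontgt n m j ≠ tgt n m := by
  simp [nontgt, tgt, Fin.ext_iff]

lemma exists_nontgt_eq_of_ne_tgt {i : Fin (1 + n + m)} (h : i ≠ tgt n m) :
    ∃ j, nontgt n m j = i :=
  ⟨⟨i - 1, by omega⟩, by
    simp only [tgt, ne_eq, Fin.ext_iff] at h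
    simp [nontgt, Fin.ext_iff]
    omega⟩

@[simp]
lemma mergeBits_tgt (b : Bool) (z : Fin (n + m) → Bool) : mergeBits n m b z (tgt n m) = b := by
  simp [mergeBits, tgt]

@[simp]
lemma mergeBits_nontgt (b : Bool) (z : Fin (n + m) → Bool) (j : Fin (n + m)) :
    mergeBits n m b z (nontgt n m j) = z j := by
  simp [mergeBits, nontgt]

@[simp]
lemma restBits_mergeBits (b : Bool) (z : Fin (n + m) → Bool) :
    restBits n m (mergeBits n m b z) = z :=
  funext fun j => mergeBits_nontgt b z j

@[simp]
lemma mergeBits_tgt_restBits (y : Fin (1 + n + m) → Bool) :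
    mergeBits n m (y (tgt n m)) (restBits n m y) = y := by
  funext i
  by_cases h : i = tgt n m
  · rw [h, mergeBits_tgt]
  · obtain ⟨j, rfl⟩ := exists_nontgt_eq_of_ne_tgt h
    rw [mergeBits_nontgt]; rfl

def mergeBitsEquiv (n m : ℕ) : Bool × (Fin (n + m) → Bool) ≃ (Fin (1 + n + m) → Bool) where
  toFun p := mergeBits n m p.1 p.2
  invFun y := (y (tgt n m), restBits n m y)
  left_inv p := by simp
  right_inv := mergeBits_tgt_restBits

lemma sum_eq_sum_mergeBits (f : (Fin (1 + n + m) → Bool) → ℂ) :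
    ∑ y, f y = ∑ b : Bool, ∑ z : Fin (n + m) → Bool, f (mergeBits n m b z) := by
  rw [← Fintype.sum_prod_type', ← (mergeBitsEquiv n m).sum_comp]
  rfl

lemma prod_eq_tgt_mul_prod_nontgt (F : Fin (1 + n + m) → ℂ) :
    ∏ j, F j = F (tgt n m) * ∏ j, F (nontgt n m j) := by
  rw [← (finCongr (by omega : n + m + 1 = 1 + n + m)).prod_comp, Fin.prod_univ_succ]
  congr 1
  exact Finset.prod_congr rfl fun j _ => congrArg F (Fin.ext (by simp [nontgt]; omega))

end TargetSplit

section ProdState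

variable {n m : ℕ}

def prodState (g : Fin 2 → ℂ) (h : QState (n + m)) : QState (1 + n + m) :=
  fun y => g (bitIdx (y (tgt n m))) * h (restBits n m y)

lemma prodState_single_apply (p : Bool) (h : QState (n + m)) (y : Fin (1 + n + m) → Bool) :
    prodState (Pi.single (bitIdx p) 1) h y =
      (if y (tgt n m) = p then (1 : ℂ) else 0) * h (restBits n m y) := by
  simp [prodState, Pi.single_apply, bitIdx_injective.eq_iff]

lemma layerAct_prodState (V : Fin (1 + n + m) → Matrix (Fin 2) (Fin 2) ℂ) (g : Fin 2 → ℂ)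
    (h : QState (n + m)) :
    layerAct V (prodState g h) =
      prodState (V (tgt n m) *ᵥ g) (layerAct (fun j => V (nontgt n m j)) h) := by
  funext x
  simp only [layerAct, prodState, mulVec, dotProduct, ← sum_bitIdx, Finset.sum_mul_sum,
    sum_eq_sum_mergeBits (n := n) (m := m), prod_eq_tgt_mul_prod_nontgt (n := n) (m := m),
    mergeBits_tgt, mergeBits_nontgt, restBits_mergeBits]
  refine Finset.sum_congr rfl fun b _ => Finset.sum_congr rfl fun z _ => ?_
  simp only [restBits]
  ring

def targetLayer (n m : ℕ) (B : Matrix (Fin 2) (Fin 2) ℂ) :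
    Fin (1 + n + m) → Matrix (Fin 2) (Fin 2) ℂ :=
  fun j => if j = tgt n m then B else 1

lemma targetLayer_mem_unitaryGroup {B : Matrix (Fin 2) (Fin 2) ℂ} (hB : B ∈ unitaryGroup (Fin 2) ℂ)
    (j : Fin (1 + n + m)) : targetLayer n m B j ∈ unitaryGroup (Fin 2) ℂ := by
  unfold targetLayer
  split_ifs
  exacts [hB, one_mem _]

lemma layerAct_targetLayer_prodState (B : Matrix (Fin 2) (Fin 2) ℂ) (g : Fin 2 → ℂ)
    (h : QState (n + m)) : layerAct (targetLayer n m B) (prodState g h) = prodState (B *ᵥ g) h := by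
  have hrest : (fun j => targetLayer n m B (nontgt n m j)) = 1 :=
    funext fun j => if_neg (nontgt_ne_tgt j)
  rw [layerAct_prodState, hrest, layerAct_eq_mulVec, layerMatrix_one, one_mulVec]
  simp [targetLayer]

end ProdState

noncomputable def czPhase {N : ℕ} (gs : List (Finset (Fin N))) (y : Fin N → Bool) : ℂ :=
  (gs.map fun S => if ∀ i ∈ S, y i = true then (-1 : ℂ) else 1).prod

section CZ

variable {N : ℕ}

lemma czLayerAct_apply (gs : List (Finset (Fin N))) (ψ : QState N) (y : Fin N → Bool) :
    czLayerAct gs ψ y = czPhase gs y * ψ y := by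
  induction gs with
  | nil => simp [czLayerAct, czPhase]
  | cons S gs ih =>
    change czGate S (czLayerAct gs ψ) y = _
    by_cases hS : ∀ i ∈ S, y i = true <;> simp [czGate, czPhase, hS, ih]

lemma czPhase_mul_self (gs : List (Finset (Fin N))) (y : Fin N → Bool) :
    czPhase gs y * czPhase gs y = 1 := by
  induction gs with
  | nil => simp [czPhase]
  | cons S gs ih =>
    simp only [czPhase, List.map_cons, List.prod_cons] at ih ⊢
    split_ifs <;> linear_combination ih

lemma norm_czPhase (gs : List (Finset (Fin N))) (y : Fin N → Bool) : ‖czPhase gs y‖ = 1 := by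
  have h := congrArg (‖·‖) (czPhase_mul_self gs y)
  simp only [norm_mul, norm_one, mul_self_eq_one_iff] at h
  exact h.resolve_right (by linarith [norm_nonneg (czPhase gs y)])

lemma czLayerAct_czLayerAct (gs : List (Finset (Fin N))) (ψ : QState N) :
    czLayerAct gs (czLayerAct gs ψ) = ψ := by
  funext y
  rw [czLayerAct_apply, czLayerAct_apply, ← mul_assoc, czPhase_mul_self, one_mul]

lemma norm_czGate_apply (S : Finset (Fin N)) (ψ : QState N) (y : Fin N → Bool) :
    ‖czGate S ψ y‖ = ‖ψ y‖ := by
  unfold czGate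
  split_ifs <;> simp

end CZ

section CZProdState

variable {n m : ℕ}

/-- As `g k = 0`, the target bit is classical on the support, so the layer only adds a phase
depending on the other bits. -/
lemma czLayerAct_prodState_of_eq_zero (gs : List (Finset (Fin (1 + n + m)))) {g : Fin 2 → ℂ}
    {k : Fin 2} (hk : g k = 0) (h : QState (n + m)) :
    ∃ h' : QState (n + m), (∀ z, ‖h' z‖ = ‖h z‖) ∧
      czLayerAct gs (prodState g h) = prodState g h' := by
  obtain ⟨b, rfl⟩ : ∃ b, bitIdx (!b) = k := by
    fin_cases k
    exacts [⟨true, rfl⟩, ⟨false, rfl⟩]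
  refine ⟨fun z => czPhase gs (mergeBits n m b z) * h z,
    fun z => by rw [norm_mul, norm_czPhase, one_mul], ?_⟩
  funext y
  rw [czLayerAct_apply]
  unfold prodState
  by_cases hy : y (tgt n m) = b
  · have hmerge : mergeBits n m b (restBits n m y) = y := by rw [← hy]; simp
    simp only [hmerge]
    ring
  · rw [Bool.eq_not.mpr hy, hk]
    simp

lemma czGate_prodState_of_tgt_notMem {S : Finset (Fin (1 + n + m))} (hS : tgt n m ∉ S)
    (g : Fin 2 → ℂ) (h : QState (n + m)) :
    czGate S (prodState g h) =
      prodState g (czGate (Finset.univ.filter fun j => nontgt n m j ∈ S) h) := by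
  funext y
  have hiff : (∀ i ∈ S, y i = true) ↔ ∀ j, nontgt n m j ∈ S → restBits n m y j = true := by
    refine ⟨fun hall j hj => hall _ hj, fun hall i hi => ?_⟩
    obtain ⟨j, rfl⟩ := exists_nontgt_eq_of_ne_tgt (ne_of_mem_of_not_mem hi hS)
    exact hall j hi
  simp only [czGate, prodState, Finset.mem_filter, Finset.mem_univ, true_and, hiff]
  split_ifs <;> ring

lemma czGate_tgt_prodState (g : Fin 2 → ℂ) (h : QState (n + m)) :
    czGate {tgt n m} (prodState g h) = prodState (diagonal ![1, -1] *ᵥ g) h := by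
  funext y
  simp only [czGate, prodState, Finset.mem_singleton, forall_eq, mulVec_diagonal]
  cases y (tgt n m) <;> simp [bitIdx]

lemma diagonal_one_neg_one_mem_unitaryGroup :
    diagonal ![(1 : ℂ), -1] ∈ unitaryGroup (Fin 2) ℂ := by
  rw [mem_unitaryGroup_iff, star_eq_conjTranspose, diagonal_conjTranspose, diagonal_mul_diagonal,
    ← diagonal_one]
  congr 1
  ext k
  fin_cases k <;> simp

/-- The gates through the target are single-qubit `Z` gates on it, so the layer splits into a
fixed diagonal unitary on the target and a phase on the other qubits. -/
lemma czLayerAct_prodState_of_card_lt_two {gs : List (Finset (Fin (1 + n + m)))}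
    (hgs : ∀ S ∈ gs, tgt n m ∈ S → S.card < 2) :
    ∃ D ∈ unitaryGroup (Fin 2) ℂ, ∀ (g : Fin 2 → ℂ) (h : QState (n + m)),
      ∃ h' : QState (n + m), (∀ z, ‖h' z‖ = ‖h z‖) ∧
        czLayerAct gs (prodState g h) = prodState (D *ᵥ g) h' := by
  induction gs with
  | nil => exact ⟨1, one_mem _, fun g h => ⟨h, fun _ => rfl, by simp [czLayerAct]⟩⟩
  | cons S gs ih =>
    obtain ⟨D, hD, hact⟩ := ih fun T hT => hgs T (List.mem_cons_of_mem S hT)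
    by_cases hS : tgt n m ∈ S
    · have hSeq : S = {tgt n m} :=
        Finset.eq_singleton_iff_unique_mem.mpr ⟨hS, fun i hi =>
          Finset.card_le_one.mp (Nat.le_of_lt_succ (hgs S List.mem_cons_self hS)) i hi _ hS⟩
      refine ⟨diagonal ![1, -1] * D, mul_mem diagonal_one_neg_one_mem_unitaryGroup hD,
        fun g h => ?_⟩
      obtain ⟨h', hh', hgs'⟩ := hact g h
      refine ⟨h', hh', ?_⟩
      change czGate S (czLayerAct gs _) = _
      rw [hgs', hSeq, czGate_tgt_prodState, mulVec_mulVec]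
    · refine ⟨D, hD, fun g h => ?_⟩
      obtain ⟨h', hh', hgs'⟩ := hact g h
      refine ⟨czGate (Finset.univ.filter fun j => nontgt n m j ∈ S) h',
        fun z => (norm_czGate_apply _ h' z).trans (hh' z), ?_⟩
      change czGate S (czLayerAct gs _) = _
      rw [hgs', czGate_prodState_of_tgt_notMem hS]

end CZProdState

section LayerAct

variable {N : ℕ} {U : Fin N → Matrix (Fin 2) (Fin 2) ℂ}

lemma layerAct_star_layerAct (hU : ∀ j, U j ∈ unitaryGroup (Fin 2) ℂ) (ψ : QState N) :
    layerAct (star U) (layerAct U ψ) = ψ := by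
  rw [layerAct_eq_mulVec, layerAct_eq_mulVec, mulVec_mulVec, layerMatrix_star,
    Unitary.star_mul_self_of_mem (layerMatrix_mem_unitaryGroup hU), one_mulVec]

lemma UnitVec.of_norm_eq {ψ φ : QState N} (hψ : UnitVec ψ) (h : ∀ x, ‖φ x‖ = ‖ψ x‖) :
    UnitVec φ := by
  simpa only [UnitVec, h] using hψ

lemma UnitVec.layerAct (hU : ∀ j, U j ∈ unitaryGroup (Fin 2) ℂ) {ψ : QState N} (hψ : UnitVec ψ) :
    UnitVec (layerAct U ψ) :=
  (sum_norm_sq_mulVec_of_mem_unitaryGroup (layerMatrix_mem_unitaryGroup hU) ψ).trans hψ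

end LayerAct

namespace QAC

variable {N d : ℕ}

def dropLast (C : QAC N (d + 1)) : QAC N d where
  L i := C.L i.castSucc
  hL i := C.hL i.castSucc
  Z i := C.Z i.castSucc
  hZ i := C.hZ i.castSucc

def mulLast (C : QAC N d) (V : Fin N → Matrix (Fin 2) (Fin 2) ℂ)
    (hV : ∀ j, V j ∈ unitaryGroup (Fin 2) ℂ) : QAC N d where
  L i j := if i = Fin.last d then V j * C.L i j else C.L i j
  hL i j := by
    split_ifs
    exacts [mul_mem (hV j) (C.hL i j), C.hL i j]
  Z := C.Z
  hZ := C.hZ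

lemma act_eq_dropLast (C : QAC N (d + 1)) (ψ : QState N) :
    C.act ψ = layerAct (C.L (Fin.last (d + 1)))
      (czLayerAct (C.Z (Fin.last d)) (C.dropLast.act ψ)) := by
  simp only [act, dropLast]
  rw [List.finRange_succ_last, List.foldl_append, List.foldl_map, List.foldl_cons, List.foldl_nil]

lemma act_mulLast (C : QAC N d) (V : Fin N → Matrix (Fin 2) (Fin 2) ℂ)
    (hV : ∀ j, V j ∈ unitaryGroup (Fin 2) ℂ) (ψ : QState N) :
    (C.mulLast V hV).act ψ = layerAct V (C.act ψ) := by
  have hlast : (C.mulLast V hV).L (Fin.last d) = V * C.L (Fin.last d) :=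
    funext fun j => if_pos rfl
  have hinner : ∀ i : Fin d, (C.mulLast V hV).L i.castSucc = C.L i.castSucc :=
    fun i => funext fun j => if_neg (Fin.castSucc_lt_last i).ne
  simp only [act, hlast, hinner, layerAct_eq_mulVec, layerMatrix_mul, ← mulVec_mulVec]
  rfl

end QAC

lemma Semiclassical.exists_apply_eq_zero {U : Matrix (Fin 2) (Fin 2) ℂ}
    (hU : U ∈ unitaryGroup (Fin 2) ℂ) (hsc : Semiclassical U) (k : Fin 2) : ∃ j, U k j = 0 := by
  obtain ⟨⟨a, b⟩, ⟨c, e⟩, hne, hab, hce⟩ := hsc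
  by_cases hac : a = c
  · subst hac
    have hrow : (U * star U) a a = 1 := by rw [Unitary.mul_star_self_of_mem hU, one_apply_eq]
    rw [mul_apply, Fin.sum_univ_two] at hrow
    fin_cases b <;> fin_cases e <;> simp_all
  · have : k = a ∨ k = c := by omega
    rcases this with rfl | rfl
    exacts [⟨b, hab⟩, ⟨e, hce⟩]

section DepthReduction

variable {n m e : ℕ} {C : QAC (1 + n + m) (e + 1)} {α : QState m}

lemma AlphaComputes.czLayerAct_dropLast_act (hC : AlphaComputes n m C α) (x : Fin n → Bool) :
    ∃ h : QState (n + m), UnitVec h ∧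
      czLayerAct (C.Z (Fin.last e)) (C.dropLast.act (inState n m false x α)) =
        prodState (star (C.L (Fin.last (e + 1)) (tgt n m)) *ᵥ
          Pi.single (bitIdx (parityB x)) 1) h := by
  obtain ⟨φ, hφ, hout⟩ := hC x
  have hL := C.hL (Fin.last (e + 1))
  refine ⟨layerAct (fun j => star (C.L (Fin.last (e + 1)) (nontgt n m j))) φ,
    hφ.layerAct fun j => Unitary.star_mem (hL _), ?_⟩
  have hout' : C.act (inState n m false x α) = prodState (Pi.single (bitIdx (parityB x)) 1) φ :=
    funext fun y => (hout y).trans (prodState_single_apply _ _ _).symm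
  rw [QAC.act_eq_dropLast] at hout'
  rw [← layerAct_star_layerAct hL (czLayerAct _ _), hout', layerAct_prodState]
  rfl

lemma AlphaComputes.exists_dropLast_act_eq_prodState (hC : AlphaComputes n m C α)
    (hcase : Semiclassical (C.L (Fin.last (e + 1)) (tgt n m)) ∨
      ∀ S ∈ C.Z (Fin.last e), tgt n m ∈ S → S.card < 2) :
    ∃ D ∈ unitaryGroup (Fin 2) ℂ, ∀ x : Fin n → Bool, ∃ h : QState (n + m), UnitVec h ∧
      C.dropLast.act (inState n m false x α) =
        prodState (D *ᵥ (star (C.L (Fin.last (e + 1)) (tgt n m)) *ᵥ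
          Pi.single (bitIdx (parityB x)) 1)) h := by
  have hinv := fun x =>
    czLayerAct_czLayerAct (C.Z (Fin.last e)) (C.dropLast.act (inState n m false x α))
  rcases hcase with hsc | hsmall
  · refine ⟨1, one_mem _, fun x => ?_⟩
    obtain ⟨h, hh, hx⟩ := hC.czLayerAct_dropLast_act x
    obtain ⟨k, hk⟩ := hsc.exists_apply_eq_zero (C.hL _ _) (bitIdx (parityB x))
    have hv : (star (C.L (Fin.last (e + 1)) (tgt n m)) *ᵥ
        Pi.single (bitIdx (parityB x)) 1) k = 0 := by
      simp [star_apply, hk]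
    obtain ⟨h', hh', hσ⟩ := czLayerAct_prodState_of_eq_zero (C.Z (Fin.last e)) hv h
    refine ⟨h', hh.of_norm_eq hh', ?_⟩
    rw [one_mulVec, ← hσ, ← hx, hinv]
  · obtain ⟨D, hD, hact⟩ := czLayerAct_prodState_of_card_lt_two hsmall
    refine ⟨D, hD, fun x => ?_⟩
    obtain ⟨h, hh, hx⟩ := hC.czLayerAct_dropLast_act x
    obtain ⟨h', hh', hσ⟩ := hact _ h
    refine ⟨h', hh.of_norm_eq hh', ?_⟩
    rw [← hσ, ← hx, hinv]

end DepthReduction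

theorem depth_reduction (n m d : ℕ) (hd : 2 ≤ d)
    (C : QAC (1 + n + m) d) (α : QState m)
    (hcomp : AlphaComputes n m C α)
    (hcase :
      Semiclassical (C.L (Fin.last d) (tgt n m)) ∨
      ∀ S ∈ C.Z ⟨d - 1, by omega⟩, tgt n m ∈ S → S.card < 2) :
    ∃ C' : QAC (1 + n + m) (d - 1), AlphaComputes n m C' α := by
  obtain ⟨e, rfl⟩ : ∃ e, d = e + 1 := ⟨d - 1, by omega⟩
  obtain ⟨D, hD, hσ⟩ := hcomp.exists_dropLast_act_eq_prodState hcase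
  set U := C.L (Fin.last (e + 1)) (tgt n m)
  have hU : U ∈ unitaryGroup (Fin 2) ℂ := C.hL _ _
  have hB : U * star D ∈ unitaryGroup (Fin 2) ℂ := mul_mem hU (Unitary.star_mem hD)
  refine ⟨C.dropLast.mulLast (targetLayer n m (U * star D)) (targetLayer_mem_unitaryGroup hB),
    fun x => ?_⟩
  obtain ⟨h, hh, hx⟩ := hσ x
  refine ⟨h, hh, fun y => ?_⟩
  have hcancel (v : Fin 2 → ℂ) : (U * star D) *ᵥ (D *ᵥ (star U *ᵥ v)) = v := by
    rw [← mulVec_mulVec _ U, mulVec_mulVec _ (star D), Unitary.star_mul_self_of_mem hD, one_mulVec,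
      mulVec_mulVec, Unitary.mul_star_self_of_mem hU, one_mulVec]
  rw [QAC.act_mulLast, hx, layerAct_targetLayer_prodState, hcancel, prodState_single_apply]
  rfl
end
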